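/- arXiv:2310.01822 — 7 statements merged into one kernel-verified Lean document; each statement's English description precedes it below -/
import Mathlib

section
/- For every integer t ≥ 3 and every ε > 0 there is n0 ∈ ℕ such that for every n ≥ n0, (1−ε)·(t!/t^t)·binom(n,t) ≤ ex(n, K(t+1,2)) ≤ (1+ε)·(t!/t^t)·binom(n,t). -/
open Finset

/-- `E` is the edge set of a simplicial complex: it is closed under taking subsets. -/
def IsComplex {α : Type*} [DecidableEq α] (E : Finset (Finset α)) : Prop :=
  ∀ e ∈ E, ∀ f ⊆ e, f ∈ E

/-- `H` contains a copy of `F`: an injection of the vertices mapping edges to edges. -/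
def HasCopy {α β : Type*} [DecidableEq β]
    (F : Finset (Finset α)) (H : Finset (Finset β)) : Prop :=
  ∃ f : α → β, Function.Injective f ∧ ∀ e ∈ F, e.image f ∈ H

/-- downward closure of a family of sets -/
def dClosure {α : Type*} [DecidableEq α] (S : Finset (Finset α)) : Finset (Finset α) :=
  S.biUnion Finset.powerset

/-- `ex(n,F)`: the extremal number for simplicial complexes -/
noncomputable def exSC {α : Type*} (n : ℕ) (F : Finset (Finset α)) : ℕ :=
  sSup {m | ∃ E : Finset (Finset (Fin n)), IsComplex E ∧ ¬ HasCopy F E ∧ E.card = m}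

/-- `ex^(k)(n,F)`: the extremal number for `k`-uniform hypergraphs -/
noncomputable def exUnif {α : Type*} (k n : ℕ) (F : Finset (Finset α)) : ℕ :=
  sSup {m | ∃ E : Finset (Finset (Fin n)),
    (∀ e ∈ E, e.card = k) ∧ ¬ HasCopy F E ∧ E.card = m}

/-- `K(t,k)`: the simplicial complex on `t` vertices whose edges are all subsets
of size at most `k` -/
def Kcomplex (t k : ℕ) : Finset (Finset (Fin t)) :=
  (Finset.univ : Finset (Fin t)).powerset.filter (fun e => e.card ≤ k)


lemma amgm {n : ℕ} (S : Finset (Fin n)) (x : Fin n → ℝ) (hx : ∀ v, 0 ≤ x v)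
    (hsum : ∑ v ∈ S, x v ≤ 1) (t : ℕ) (hcard : S.card = t) (ht : 1 ≤ t) :
    ∏ v ∈ S, x v ≤ (1 / t) ^ t := by
  have ht0 : (0:ℝ) < t := by positivity
  have hgm := Real.geom_mean_le_arith_mean_weighted S (fun _ => 1 / t) x
    (fun i _ => by positivity)
    (by simp [hcard]; field_simp) (fun i _ => hx i)
  have h1 : ∑ i ∈ S, (1 / (t:ℝ)) * x i ≤ 1 / t := by
    rw [← Finset.mul_sum]
    calc (1/(t:ℝ)) * ∑ i ∈ S, x i ≤ (1/t) * 1 := by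
          apply mul_le_mul_of_nonneg_left hsum (by positivity)
      _ = 1/t := by ring
  have h2 : ∏ i ∈ S, x i ^ (1/(t:ℝ)) ≤ 1 / t := hgm.trans h1
  have h3 : (∏ i ∈ S, x i ^ (1/(t:ℝ))) ^ t ≤ (1/(t:ℝ)) ^ t :=
    pow_le_pow_left₀ (Finset.prod_nonneg fun i _ => Real.rpow_nonneg (hx i) _) h2 t
  calc ∏ v ∈ S, x v = (∏ i ∈ S, x i ^ (1/(t:ℝ))) ^ t := by
        rw [← Finset.prod_pow]
        apply Finset.prod_congr rfl
        intro i _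
        rw [← Real.rpow_natCast (x i ^ (1/(t:ℝ))), ← Real.rpow_mul (hx i)]
        rw [one_div_mul_cancel (by positivity : (t:ℝ) ≠ 0), Real.rpow_one]
    _ ≤ (1/(t:ℝ)) ^ t := h3

lemma key (t : ℕ) (ht : 1 ≤ t) {n : ℕ} (G : SimpleGraph (Fin n))
    (hG : G.CliqueFree (t+1)) :
    ∀ k : ℕ, ∀ (T : Finset (Finset (Fin n))), (∀ e ∈ T, G.IsNClique t e) →
    ∀ x : Fin n → ℝ, (∀ v, 0 ≤ x v) → (∑ v, x v = 1) →
    ((univ.filter (fun v => x v ≠ 0)).card ≤ k) →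
    ∑ e ∈ T, ∏ v ∈ e, x v ≤ (1/t)^t := by
  intro k
  induction k with
  | zero =>
    intro T hT x hx hsum hsupp
    exfalso
    have hemp : (univ.filter (fun v => x v ≠ 0)) = ∅ :=
      Finset.card_eq_zero.mp (Nat.le_zero.mp hsupp)
    have hz : ∀ v, x v = 0 := by
      intro v
      by_contra hv
      have hm : v ∈ univ.filter (fun v => x v ≠ 0) := by simp [hv]
      rw [hemp] at hm
      exact absurd hm (Finset.notMem_empty v)
    rw [Finset.sum_congr rfl (fun v _ => hz v)] at hsum
    simp at hsum
  | succ k ih =>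
    intro T hT x hx hsum hsupp
    set S := univ.filter (fun v => x v ≠ 0) with hSdef
    have hmemS : ∀ w, w ∈ S ↔ x w ≠ 0 := by intro w; simp [hSdef]
    by_cases hclq : ∀ u ∈ S, ∀ v ∈ S, u ≠ v → G.Adj u v
    · -- support is a clique
      have hScard : S.card ≤ t := by
        by_contra hc
        push_neg at hc
        obtain ⟨W, hWS, hWcard⟩ := Finset.exists_subset_card_eq (show t+1 ≤ S.card by omega)
        exact hG W ⟨fun a ha b hb hab => hclq a (hWS ha) b (hWS hb) hab, hWcard⟩
      have hzero : ∀ e ∈ T, e ≠ S → ∏ v ∈ e, x v = 0 := by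
        intro e he hne
        by_cases hsub : e ⊆ S
        · exact absurd (Finset.eq_of_subset_of_card_le hsub
            (by rw [(hT e he).2]; exact hScard)) hne
        · obtain ⟨v, hv, hvS⟩ := Finset.not_subset.mp hsub
          refine Finset.prod_eq_zero hv ?_
          by_contra hxv
          exact hvS ((hmemS v).mpr hxv)
      have hSsum : ∑ w ∈ S, x w ≤ 1 := by
        rw [← hsum]
        exact Finset.sum_le_sum_of_subset_of_nonneg (Finset.subset_univ S) fun i _ _ => hx i
      by_cases hmem : S ∈ T
      · rw [Finset.sum_eq_single_of_mem S hmem (fun b hb hbne => hzero b hb hbne)]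
        exact amgm S x hx hSsum t (hT S hmem).2 ht
      · rw [Finset.sum_eq_zero (fun e he => hzero e he (by rintro rfl; exact hmem he))]
        positivity
    · -- support not a clique: shift weight
      push_neg at hclq
      obtain ⟨u, hu, v, hv, huv, hadj⟩ := hclq
      have step : ∀ u v : Fin n, u ∈ S → v ∈ S → u ≠ v → ¬ G.Adj u v →
          (∑ e ∈ T.filter (fun e => v ∈ e), ∏ w ∈ e.erase v, x w) ≤
          (∑ e ∈ T.filter (fun e => u ∈ e), ∏ w ∈ e.erase u, x w) →
          ∑ e ∈ T, ∏ w ∈ e, x w ≤ (1/t)^t := by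
        clear hu hv huv hadj u v
        intro u v hu hv huv hadj hBA
        have hnob : ∀ e ∈ T, u ∈ e → v ∉ e := by
          intro e he hue hve
          exact hadj ((hT e he).1 hue hve huv)
        have hnob' : ∀ e ∈ T, v ∈ e → u ∉ e := fun e he hve hue => hnob e he hue hve
        set x' := Function.update (Function.update x v 0) u (x u + x v) with hx'def
        have hx'u : x' u = x u + x v := Function.update_self _ _ _
        have hx'v : x' v = 0 := by
          rw [hx'def, Function.update_of_ne (Ne.symm huv), Function.update_self]
        have hx'w : ∀ w, w ≠ u → w ≠ v → x' w = x w := by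
          intro w hwu hwv
          rw [hx'def, Function.update_of_ne hwu, Function.update_of_ne hwv]
        have hx' : ∀ w, 0 ≤ x' w := by
          intro w
          by_cases h1 : w = u
          · rw [h1, hx'u]; exact add_nonneg (hx u) (hx v)
          · by_cases h2 : w = v
            · rw [h2, hx'v]
            · rw [hx'w w h1 h2]; exact hx w
        have hsum' : ∑ w, x' w = 1 := by
          rw [← Finset.add_sum_erase _ x' (Finset.mem_univ u), hx'u]
          have hvmem : v ∈ univ.erase u := Finset.mem_erase.mpr ⟨Ne.symm huv, Finset.mem_univ v⟩
          rw [← Finset.add_sum_erase _ x' hvmem, hx'v]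
          have : ∑ w ∈ (univ.erase u).erase v, x' w = ∑ w ∈ (univ.erase u).erase v, x w := by
            apply Finset.sum_congr rfl
            intro w hw
            have hw1 := Finset.mem_erase.mp hw
            have hw2 := Finset.mem_erase.mp hw1.2
            exact hx'w w hw2.1 hw1.1
          rw [this, ← hsum, ← Finset.add_sum_erase _ x (Finset.mem_univ u),
            ← Finset.add_sum_erase _ x hvmem]
          ring
        have hsupp' : (univ.filter (fun w => x' w ≠ 0)).card ≤ k := by
          have hsub : (univ.filter (fun w => x' w ≠ 0)) ⊆ S.erase v := by
            intro w hw
            have hwne : x' w ≠ 0 := (Finset.mem_filter.mp hw).2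
            have hwv : w ≠ v := by rintro rfl; exact hwne hx'v
            by_cases hwu : w = u
            · subst hwu; exact Finset.mem_erase.mpr ⟨hwv, hu⟩
            · rw [hx'w w hwu hwv] at hwne
              exact Finset.mem_erase.mpr ⟨hwv, (hmemS w).mpr hwne⟩
          calc (univ.filter (fun w => x' w ≠ 0)).card ≤ (S.erase v).card :=
                Finset.card_le_card hsub
            _ = S.card - 1 := Finset.card_erase_of_mem hv
            _ ≤ k := by omega
        have hmono : ∑ e ∈ T, ∏ w ∈ e, x w ≤ ∑ e ∈ T, ∏ w ∈ e, x' w := by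
          rw [← Finset.sum_filter_add_sum_filter_not T (fun e => u ∈ e) (fun e => ∏ w ∈ e, x w),
              ← Finset.sum_filter_add_sum_filter_not T (fun e => u ∈ e) (fun e => ∏ w ∈ e, x' w),
              ← Finset.sum_filter_add_sum_filter_not (T.filter (fun e => u ∉ e)) (fun e => v ∈ e)
                (fun e => ∏ w ∈ e, x w),
              ← Finset.sum_filter_add_sum_filter_not (T.filter (fun e => u ∉ e)) (fun e => v ∈ e)
                (fun e => ∏ w ∈ e, x' w)]
          have hTu : ∀ e ∈ T.filter (fun e => u ∈ e), ∏ w ∈ e.erase u, x' w = ∏ w ∈ e.erase u, x w := by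
            intro e he
            obtain ⟨heT, hue⟩ := Finset.mem_filter.mp he
            apply Finset.prod_congr rfl
            intro w hw
            exact hx'w w (Finset.mem_erase.mp hw).1 (by rintro rfl; exact hnob e heT hue (Finset.mem_of_mem_erase hw))
          have h1 : ∑ e ∈ T.filter (fun e => u ∈ e), ∏ w ∈ e, x w
              = x u * ∑ e ∈ T.filter (fun e => u ∈ e), ∏ w ∈ e.erase u, x w := by
            rw [Finset.mul_sum]
            apply Finset.sum_congr rfl
            intro e he
            rw [Finset.mul_prod_erase e x (Finset.mem_filter.mp he).2]
          have h1' : ∑ e ∈ T.filter (fun e => u ∈ e), ∏ w ∈ e, x' w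
              = (x u + x v) * ∑ e ∈ T.filter (fun e => u ∈ e), ∏ w ∈ e.erase u, x w := by
            rw [Finset.mul_sum]
            apply Finset.sum_congr rfl
            intro e he
            rw [← Finset.mul_prod_erase e x' (Finset.mem_filter.mp he).2, hx'u, hTu e he]
          have h2 : ∑ e ∈ (T.filter (fun e => u ∉ e)).filter (fun e => v ∈ e), ∏ w ∈ e, x w
              = x v * ∑ e ∈ (T.filter (fun e => u ∉ e)).filter (fun e => v ∈ e),
                  ∏ w ∈ e.erase v, x w := by
            rw [Finset.mul_sum]
            apply Finset.sum_congr rfl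
            intro e he
            rw [Finset.mul_prod_erase e x (Finset.mem_filter.mp he).2]
          have h2' : ∑ e ∈ (T.filter (fun e => u ∉ e)).filter (fun e => v ∈ e), ∏ w ∈ e, x' w
              = 0 := by
            apply Finset.sum_eq_zero
            intro e he
            exact Finset.prod_eq_zero (Finset.mem_filter.mp he).2 hx'v
          have h3 : ∑ e ∈ (T.filter (fun e => u ∉ e)).filter (fun e => v ∉ e), ∏ w ∈ e, x' w
              = ∑ e ∈ (T.filter (fun e => u ∉ e)).filter (fun e => v ∉ e), ∏ w ∈ e, x w := by
            apply Finset.sum_congr rfl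
            intro e he
            have h4 := Finset.mem_filter.mp he
            have h5 := Finset.mem_filter.mp h4.1
            apply Finset.prod_congr rfl
            intro w hw
            exact hx'w w (by rintro rfl; exact h5.2 hw) (by rintro rfl; exact h4.2 hw)
          rw [h1, h1', h2, h2', h3]
          have hfil : (T.filter (fun e => u ∉ e)).filter (fun e => v ∈ e)
              = T.filter (fun e => v ∈ e) := by
            rw [Finset.filter_filter]
            apply Finset.filter_congr
            intro e he
            simp only [and_iff_right_iff_imp]
            exact fun hve => hnob' e he hve
          rw [hfil]
          have hA : (0:ℝ) ≤ ∑ e ∈ T.filter (fun e => u ∈ e), ∏ w ∈ e.erase u, x w :=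
            Finset.sum_nonneg fun e _ => Finset.prod_nonneg fun w _ => hx w
          nlinarith [mul_le_mul_of_nonneg_left hBA (hx v)]
        exact hmono.trans (ih T hT x' hx' hsum' hsupp')
      rcases le_total (∑ e ∈ T.filter (fun e => v ∈ e), ∏ w ∈ e.erase v, x w)
        (∑ e ∈ T.filter (fun e => u ∈ e), ∏ w ∈ e.erase u, x w) with h | h
      · exact step u v hu hv huv hadj h
      · exact step v u hv hu (Ne.symm huv) (fun hA => hadj hA.symm) h

lemma count_cliques (t : ℕ) (ht : 1 ≤ t) {n : ℕ} (hn : 1 ≤ n) (G : SimpleGraph (Fin n))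
    (hG : G.CliqueFree (t+1)) (T : Finset (Finset (Fin n)))
    (hT : ∀ e ∈ T, G.IsNClique t e) :
    (T.card : ℝ) ≤ ((n:ℝ)/t)^t := by
  have hn0 : (0:ℝ) < n := by positivity
  have h := key t ht G hG n T hT (fun _ => 1/n) (fun _ => by positivity)
    (by simp; field_simp) (by exact (Finset.card_filter_le _ _).trans (by simp))
  have hsum : ∑ e ∈ T, ∏ _v ∈ e, (1/(n:ℝ)) = (T.card : ℝ) * (1/n)^t := by
    rw [Finset.sum_congr rfl (fun e he => by
      rw [Finset.prod_const, (hT e he).2])]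
    rw [Finset.sum_const, nsmul_eq_mul]
  rw [hsum] at h
  calc (T.card:ℝ) = (T.card:ℝ) * (1/n)^t * (n:ℝ)^t := by
        rw [one_div, inv_pow, mul_assoc, inv_mul_cancel₀ (by positivity), mul_one]
    _ ≤ (1/t)^t * (n:ℝ)^t := by
        apply mul_le_mul_of_nonneg_right h (by positivity)
    _ = ((n:ℝ)/t)^t := by rw [← mul_pow]; congr 1; ring

lemma pair_mem_kcomplex {t : ℕ} (i j : Fin (t+1)) : ({i, j} : Finset (Fin (t+1))) ∈ Kcomplex (t+1) 2 := by
  simp only [Kcomplex, Finset.mem_filter, Finset.mem_powerset]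
  exact ⟨Finset.subset_univ _, Finset.card_insert_le _ _ |>.trans (by simp)⟩

lemma hasCopy_pairs {n t : ℕ} {E : Finset (Finset (Fin n))}
    (h : HasCopy (Kcomplex (t+1) 2) E) :
    ∃ f : Fin (t+1) → Fin n, Function.Injective f ∧
      ∀ i j : Fin (t+1), ({f i, f j} : Finset (Fin n)) ∈ E := by
  obtain ⟨f, hf, himg⟩ := h
  refine ⟨f, hf, fun i j => ?_⟩
  have := himg _ (pair_mem_kcomplex i j)
  rwa [Finset.image_insert, Finset.image_singleton] at this

lemma hasCopy_of_pairs {n t : ℕ} (ht : 1 ≤ t) (E : Finset (Finset (Fin n)))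
    (hE : IsComplex E) (f : Fin (t+1) → Fin n) (hf : Function.Injective f)
    (hp : ∀ i j : Fin (t+1), i ≠ j → ({f i, f j} : Finset (Fin n)) ∈ E) :
    HasCopy (Kcomplex (t+1) 2) E := by
  have h01 : (⟨0, by omega⟩ : Fin (t+1)) ≠ ⟨1, by omega⟩ := by simp [Fin.ext_iff]
  have hpair0 : ({f ⟨0, by omega⟩, f ⟨1, by omega⟩} : Finset (Fin n)) ∈ E := hp _ _ h01
  refine ⟨f, hf, fun a ha => ?_⟩
  simp only [Kcomplex, Finset.mem_filter, Finset.mem_powerset] at ha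
  obtain ⟨-, hac⟩ := ha
  interval_cases h : a.card
  · rw [Finset.card_eq_zero.mp h]
    exact hE _ hpair0 ∅ (Finset.empty_subset _)
  · obtain ⟨i, rfl⟩ := Finset.card_eq_one.mp h
    rw [Finset.image_singleton]
    by_cases hi : i = ⟨0, by omega⟩
    · exact hE _ hpair0 {f i} (by rw [hi]; exact Finset.singleton_subset_iff.mpr (by simp))
    · exact hE _ (hp i ⟨0, by omega⟩ hi) {f i}
        (Finset.singleton_subset_iff.mpr (by simp))
  · obtain ⟨i, j, hij, rfl⟩ := Finset.card_eq_two.mp h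
    rw [Finset.image_insert, Finset.image_singleton]
    exact hp i j hij

-- difference of powers bound
lemma pow_sub_bound : ∀ (t : ℕ) {a b : ℝ}, 0 ≤ b → b ≤ a →
    a^t ≤ b^t + t*(a-b)*a^(t-1) := by
  intro t
  induction t with
  | zero => intro a b _ _; simp
  | succ s ih =>
    intro a b hb hba
    rcases Nat.eq_zero_or_pos s with rfl | hs
    · simp
    · have ha : 0 ≤ a := hb.trans hba
      have ihs := ih hb hba
      have hss : a^s = a^(s-1)*a := by
        rw [← pow_succ]; congr 1; omega
      have hbs : b^s ≤ a^s := pow_le_pow_left₀ hb hba s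
      have hpows : (0:ℝ) ≤ a^s := pow_nonneg ha _
      simp only [Nat.add_sub_cancel]
      push_cast
      have key1 : a * a^s ≤ a * b^s + s*(a-b)*a^s := by
        calc a * a^s ≤ a * (b^s + s*(a-b)*a^(s-1)) := mul_le_mul_of_nonneg_left ihs ha
          _ = a*b^s + s*(a-b)*(a^(s-1)*a) := by ring
          _ = a*b^s + s*(a-b)*a^s := by rw [← hss]
      calc a^(s+1) = a * a^s := by ring
        _ ≤ a*b^s + s*(a-b)*a^s := key1
        _ ≤ b^(s+1) + (s+1)*(a-b)*a^s := by
            have hb2 : b^(s+1) = b*b^s := by ring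
            nlinarith [mul_le_mul_of_nonneg_left hbs (sub_nonneg.mpr hba), hb2]

-- the construction for the lower bound
lemma lower_construction (t n : ℕ) (ht : 1 ≤ t) :
    ∃ Econ : Finset (Finset (Fin n)), IsComplex Econ ∧
      ¬ HasCopy (Kcomplex (t+1) 2) Econ ∧ (n/t)^t ≤ Econ.card := by
  classical
  set P : Finset (Fin n) → Prop :=
    fun e => ∀ u ∈ e, ∀ v ∈ e, u ≠ v → (u:ℕ) % t ≠ (v:ℕ) % t with hP
  set Econ : Finset (Finset (Fin n)) := univ.filter P with hE
  have hmem : ∀ e, e ∈ Econ ↔ P e := by intro e; simp [hE]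
  refine ⟨Econ, ?_, ?_, ?_⟩
  · intro e he f hf
    rw [hmem] at he ⊢
    exact fun u hu v hv huv => he u (hf hu) v (hf hv) huv
  · intro h
    obtain ⟨f, hf, hp⟩ := hasCopy_pairs h
    have hg : ∀ i j : Fin (t+1), i ≠ j → (f i : ℕ) % t ≠ (f j : ℕ) % t := by
      intro i j hij
      have hpm := (hmem _).mp (hp i j)
      exact hpm (f i) (by simp) (f j) (by simp) (fun hc => hij (hf hc))
    have ht0 : 0 < t := ht
    let g : Fin (t+1) → Fin t := fun i => ⟨(f i : ℕ) % t, Nat.mod_lt _ ht0⟩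
    have hginj : Function.Injective g := by
      intro i j hij
      by_contra hne
      exact hg i j hne (by simpa [g, Fin.ext_iff] using hij)
    have := Fintype.card_le_of_injective g hginj
    simp at this
  · set m := n / t with hm
    have htm : t * m ≤ n := by rw [hm]; exact Nat.mul_div_le n t
    have hlt : ∀ (k : Fin t) (q : Fin m), (k : ℕ) + t * (q : ℕ) < n := by
      intro k q
      calc (k:ℕ) + t * q < t + t * q := by omega
        _ = t * (q + 1) := by ring
        _ ≤ t * m := Nat.mul_le_mul_left t q.2
        _ ≤ n := htm
    set ψ : (Fin t → Fin m) → Finset (Fin n) :=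
      fun g => univ.image (fun k : Fin t => (⟨(k:ℕ) + t * (g k : ℕ), hlt k (g k)⟩ : Fin n))
      with hψ
    have hmod : ∀ (k : Fin t) (q : Fin m), ((k:ℕ) + t * (q:ℕ)) % t = (k:ℕ) := by
      intro k q
      rw [Nat.add_mul_mod_self_left, Nat.mod_eq_of_lt k.2]
    have hmaps : ∀ g, ψ g ∈ Econ := by
      intro g
      rw [hmem]
      intro u hu v hv huv
      simp only [hψ, Finset.mem_image, Finset.mem_univ, true_and] at hu hv
      obtain ⟨k, rfl⟩ := hu
      obtain ⟨k', rfl⟩ := hv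
      simp only [hmod]
      intro hkk
      exact huv (by have hkeq : k = k' := Fin.ext hkk; subst hkeq; rfl)
    have hinj : Function.Injective ψ := by
      intro g g' hgg
      funext k
      have hk : (⟨(k:ℕ) + t * (g k : ℕ), hlt k (g k)⟩ : Fin n) ∈ ψ g' := by
        rw [← hgg]; simp [hψ]
      simp only [hψ, Finset.mem_image, Finset.mem_univ, true_and] at hk
      obtain ⟨k', hk'⟩ := hk
      rw [Fin.ext_iff] at hk'
      simp only at hk'
      have hmk := hmod k' (g' k')
      have hmk2 := hmod k (g k)
      rw [hk'] at hmk
      have hkk : k' = k := Fin.ext (hmk.symm.trans hmk2)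
      subst hkk
      have ht0 : 0 < t := ht
      have heq : (g' k' : ℕ) = (g k' : ℕ) :=
        Nat.eq_of_mul_eq_mul_left ht0 (by omega)
      exact Fin.ext heq.symm
    calc m ^ t = (univ : Finset (Fin t → Fin m)).card := by
          simp [Finset.card_univ, Fintype.card_fun]
      _ ≤ Econ.card := Finset.card_le_card_of_injOn ψ (fun g _ => hmaps g)
          (Function.Injective.injOn hinj)

def graphOf {n : ℕ} (E : Finset (Finset (Fin n))) : SimpleGraph (Fin n) where
  Adj u v := u ≠ v ∧ ({u, v} : Finset (Fin n)) ∈ E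
  symm := by
    constructor
    intro u v h
    exact ⟨h.1.symm, by rw [Finset.pair_comm]; exact h.2⟩
  loopless := by constructor; intro u h; exact h.1 rfl

/-- a map enumerating a finset of size t+1 -/
noncomputable def enumMap {n t : ℕ} (W : Finset (Fin n)) (hW : W.card = t+1) :
    Fin (t+1) → Fin n :=
  fun i => (W.orderIsoOfFin hW i : Fin n)

lemma enumMap_inj {n t : ℕ} (W : Finset (Fin n)) (hW : W.card = t+1) :
    Function.Injective (enumMap W hW) := by
  intro i j hij
  exact (W.orderIsoOfFin hW).injective (Subtype.ext hij)

lemma enumMap_mem {n t : ℕ} (W : Finset (Fin n)) (hW : W.card = t+1) (i : Fin (t+1)) :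
    enumMap W hW i ∈ W := (W.orderIsoOfFin hW i).2

lemma graphOf_cliqueFree {n t : ℕ} (ht : 1 ≤ t) (E : Finset (Finset (Fin n)))
    (hE : IsComplex E) (hnc : ¬ HasCopy (Kcomplex (t+1) 2) E) :
    (graphOf E).CliqueFree (t+1) := by
  intro W hW
  apply hnc
  apply hasCopy_of_pairs ht E hE (enumMap W hW.2) (enumMap_inj W hW.2)
  intro i j hij
  have hne : enumMap W hW.2 i ≠ enumMap W hW.2 j := fun hc => hij (enumMap_inj W hW.2 hc)
  exact (hW.1 (enumMap_mem W hW.2 i) (enumMap_mem W hW.2 j) hne).2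

lemma card_le_t {n t : ℕ} (ht : 1 ≤ t) (E : Finset (Finset (Fin n)))
    (hE : IsComplex E) (hnc : ¬ HasCopy (Kcomplex (t+1) 2) E) :
    ∀ e ∈ E, e.card ≤ t := by
  intro e he
  by_contra hc
  push_neg at hc
  obtain ⟨W, hWe, hWcard⟩ := Finset.exists_subset_card_eq (show t+1 ≤ e.card by omega)
  apply hnc
  apply hasCopy_of_pairs ht E hE (enumMap W hWcard) (enumMap_inj W hWcard)
  intro i j hij
  apply hE e he
  intro w hw
  rcases Finset.mem_insert.mp hw with rfl | hw
  · exact hWe (enumMap_mem W hWcard i)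
  · rw [Finset.mem_singleton.mp hw]
    exact hWe (enumMap_mem W hWcard j)

lemma tEdges_clique {n t : ℕ} (E : Finset (Finset (Fin n))) (hE : IsComplex E) :
    ∀ e ∈ E.filter (fun e => e.card = t), (graphOf E).IsNClique t e := by
  intro e he
  obtain ⟨heE, hecard⟩ := Finset.mem_filter.mp he
  constructor
  · intro u hu v hv huv
    refine ⟨huv, hE e heE _ ?_⟩
    intro w hw
    rcases Finset.mem_insert.mp hw with rfl | hw
    · exact hu
    · rw [Finset.mem_singleton.mp hw]; exact hv
  · exact hecard

lemma smallEdges_bound {n t : ℕ} (E : Finset (Finset (Fin n)))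
    (hle : ∀ e ∈ E, e.card ≤ t) :
    (E.filter (fun e => e.card ≠ t)).card ≤ ∑ s ∈ range t, n.choose s := by
  have hsub : E.filter (fun e => e.card ≠ t) ⊆
      (range t).biUnion (fun s => (univ : Finset (Fin n)).powersetCard s) := by
    intro e he
    obtain ⟨heE, hecard⟩ := Finset.mem_filter.mp he
    apply Finset.mem_biUnion.mpr
    exact ⟨e.card, Finset.mem_range.mpr (lt_of_le_of_ne (hle e heE) hecard),
      Finset.mem_powersetCard.mpr ⟨Finset.subset_univ e, rfl⟩⟩
  calc (E.filter (fun e => e.card ≠ t)).card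
      ≤ ((range t).biUnion (fun s => (univ : Finset (Fin n)).powersetCard s)).card :=
        Finset.card_le_card hsub
    _ ≤ ∑ s ∈ range t, ((univ : Finset (Fin n)).powersetCard s).card :=
        Finset.card_biUnion_le
    _ = ∑ s ∈ range t, n.choose s := by
        apply Finset.sum_congr rfl
        intro s _
        rw [Finset.card_powersetCard, Finset.card_univ, Fintype.card_fin]

theorem statement9 (t : ℕ) (ht : 3 ≤ t) (ε : ℝ) (hε : 0 < ε) :
    ∃ n0 : ℕ, ∀ n : ℕ, n0 ≤ n →
      (1 - ε) * ((t.factorial : ℝ) / (t : ℝ) ^ t) * (n.choose t : ℝ) ≤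
          (exSC n (Kcomplex (t + 1) 2) : ℝ) ∧
      (exSC n (Kcomplex (t + 1) 2) : ℝ) ≤
          (1 + ε) * ((t.factorial : ℝ) / (t : ℝ) ^ t) * (n.choose t : ℝ) := by
  have ht1 : 1 ≤ t := by omega
  obtain ⟨n1, hn1⟩ := exists_nat_gt ((((t:ℝ)+t^2)*2^t*t^t + t^2)/ε)
  refine ⟨n1 + 2*t + 1, fun n hn => ?_⟩
  have hnt : 2*t + 1 ≤ n := by omega
  have hn1' : (n1:ℝ) ≤ (n:ℝ) := by exact_mod_cast (by omega : n1 ≤ n)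
  have hεn : (((t:ℝ)+t^2)*2^t*t^t + t^2) < ε * n := by
    rw [div_lt_iff₀ hε] at hn1
    calc (((t:ℝ)+t^2)*2^t*t^t + t^2) < n1 * ε := hn1
      _ ≤ n * ε := by apply mul_le_mul_of_nonneg_right hn1' hε.le
      _ = ε * n := by ring
  have ht0 : (0:ℝ) < t := by positivity
  have hn0 : (0:ℝ) < n := by
    have : (1:ℕ) ≤ n := by omega
    exact_mod_cast Nat.lt_of_lt_of_le Nat.zero_lt_one this
  have htn : (t:ℝ) ≤ (n:ℝ)/2 := by
    rw [le_div_iff₀ (by norm_num : (0:ℝ) < 2)]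
    exact_mod_cast (by omega : t*2 ≤ n)
  have htn' : (t:ℝ) ≤ n := htn.trans (by linarith)
  -- descFactorial facts
  have hkey : (t.factorial : ℝ)/(t:ℝ)^t * (n.choose t : ℝ) = (n.descFactorial t : ℝ)/(t:ℝ)^t := by
    have : (n.descFactorial t : ℝ) = (t.factorial : ℝ) * (n.choose t : ℝ) := by
      exact_mod_cast congrArg (Nat.cast : ℕ → ℝ) (Nat.descFactorial_eq_factorial_mul_choose n t)
    rw [this]; ring
  have hdesc_le : (n.descFactorial t : ℝ) ≤ (n:ℝ)^t := by
    exact_mod_cast Nat.descFactorial_le_pow n t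
  have hdesc_ge : ((n:ℝ) - t)^t ≤ (n.descFactorial t : ℝ) := by
    have h1 : ((n + 1 - t : ℕ) : ℝ)^t ≤ (n.descFactorial t : ℝ) := by
      exact_mod_cast Nat.pow_sub_le_descFactorial n t
    refine le_trans (pow_le_pow_left₀ (by linarith) ?_ t) h1
    have : ((n + 1 - t : ℕ) : ℝ) = (n:ℝ) + 1 - t := by
      rw [Nat.cast_sub (by omega : t ≤ n + 1)]; push_cast; ring
    rw [this]; linarith
  have hppos : (0:ℝ) ≤ (n:ℝ)^(t-1) := by positivity
  have hnn : (n:ℝ)^t = (n:ℝ)^(t-1) * n := by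
    rw [← pow_succ]; congr 1; omega
  have hpow_bound : (n:ℝ)^t ≤ ((n:ℝ)-t)^t + (t:ℝ)^2 * (n:ℝ)^(t-1) := by
    have h := pow_sub_bound t (show (0:ℝ) ≤ (n:ℝ) - t by linarith)
      (show (n:ℝ)-t ≤ n by linarith)
    have hsimp : (t:ℝ) * ((n:ℝ) - ((n:ℝ)-t)) * (n:ℝ)^(t-1) = (t:ℝ)^2 * (n:ℝ)^(t-1) := by ring
    linarith [h, hsimp.ge]
  have hεbig : (t:ℝ)^2 * (n:ℝ)^(t-1) ≤ ε * (n:ℝ)^t := by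
    have hA : (0:ℝ) ≤ ((t:ℝ)+(t:ℝ)^2)*2^t*(t:ℝ)^t := by positivity
    have h1 : (t:ℝ)^2 ≤ ε * n := by linarith
    calc (t:ℝ)^2 * (n:ℝ)^(t-1) ≤ (ε * n) * (n:ℝ)^(t-1) := by
          exact mul_le_mul_of_nonneg_right h1 hppos
      _ = ε * (n:ℝ)^t := by rw [hnn]; ring
  -- the sSup set
  set SC : Set ℕ :=
    {m | ∃ E : Finset (Finset (Fin n)), IsComplex E ∧ ¬ HasCopy (Kcomplex (t+1) 2) E ∧ E.card = m}
    with hSC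
  have hbdd : BddAbove SC := by
    refine ⟨2^n, fun m hm => ?_⟩
    obtain ⟨E, _, _, hcard⟩ := hm
    calc m = E.card := hcard.symm
      _ ≤ (univ : Finset (Finset (Fin n))).card := Finset.card_le_univ E
      _ = 2^n := by rw [Finset.card_univ, Fintype.card_finset, Fintype.card_fin]
  have hne : SC.Nonempty := by
    refine ⟨0, ∅, fun e he => absurd he (Finset.notMem_empty e), ?_, Finset.card_empty⟩
    rintro ⟨f, hf, himg⟩
    have hemp : (∅ : Finset (Fin (t+1))) ∈ Kcomplex (t+1) 2 := by
      simp [Kcomplex]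
    have := himg ∅ hemp
    simp at this
  have hexSC : exSC n (Kcomplex (t+1) 2) = sSup SC := rfl
  constructor
  · -- lower bound
    by_cases hε1 : 1 ≤ ε
    · have h0 : (1 - ε) ≤ 0 := by linarith
      have hc0 : (0:ℝ) ≤ (t.factorial:ℝ)/(t:ℝ)^t * (n.choose t : ℝ) := by positivity
      have hsc : (0:ℝ) ≤ (exSC n (Kcomplex (t+1) 2) : ℝ) := Nat.cast_nonneg _
      nlinarith
    · push_neg at hε1
      obtain ⟨Econ, hcp, hnc, hcard⟩ := lower_construction t n ht1
      have hle : (n/t)^t ≤ exSC n (Kcomplex (t+1) 2) := by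
        rw [hexSC]
        exact le_trans hcard (le_csSup hbdd ⟨Econ, hcp, hnc, rfl⟩)
      have hm : ((n:ℝ) - t)/t ≤ ((n/t : ℕ) : ℝ) := by
        rw [div_le_iff₀ ht0]
        have h2 : n % t < t := Nat.mod_lt n (show 0 < t by omega)
        have h3 := Nat.mod_add_div n t
        have h3R : ((n % t : ℕ):ℝ) + (t:ℝ) * ((n/t : ℕ):ℝ) = (n:ℝ) := by exact_mod_cast h3
        have h2R : ((n % t : ℕ):ℝ) < (t:ℝ) := by exact_mod_cast h2
        linarith
      have hfinal : (1-ε) * ((n:ℝ))^t ≤ ((n:ℝ)-t)^t := by nlinarith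
      calc (1-ε) * ((t.factorial:ℝ)/(t:ℝ)^t) * (n.choose t : ℝ)
          = (1-ε) * ((n.descFactorial t : ℝ)/(t:ℝ)^t) := by rw [mul_assoc, hkey]
        _ ≤ (1-ε) * ((n:ℝ)^t/(t:ℝ)^t) := by
            have h9 : (n.descFactorial t : ℝ)/(t:ℝ)^t ≤ (n:ℝ)^t/(t:ℝ)^t := by gcongr
            exact mul_le_mul_of_nonneg_left h9 (by linarith : (0:ℝ) ≤ 1-ε)
        _ = (1-ε) * (n:ℝ)^t / (t:ℝ)^t := by ring
        _ ≤ ((n:ℝ)-t)^t / (t:ℝ)^t := by gcongr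
        _ = (((n:ℝ)-t)/t)^t := by rw [div_pow]
        _ ≤ ((n/t : ℕ) : ℝ)^t := by
            exact pow_le_pow_left₀ (div_nonneg (by linarith) ht0.le) hm t
        _ = (((n/t)^t : ℕ) : ℝ) := by push_cast; ring
        _ ≤ (exSC n (Kcomplex (t+1) 2) : ℝ) := by exact_mod_cast hle
  · -- upper bound
    obtain ⟨E, hcp, hnc, hcard⟩ := Nat.sSup_mem hne hbdd
    rw [hexSC, ← hcard]
    have hlet := card_le_t ht1 E hcp hnc
    have hGfree := graphOf_cliqueFree ht1 E hcp hnc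
    have hsplit : E.card = (E.filter (fun e => e.card = t)).card
        + (E.filter (fun e => e.card ≠ t)).card := by
      exact (Finset.card_filter_add_card_filter_not _).symm
    have hT : ((E.filter (fun e => e.card = t)).card : ℝ) ≤ (n:ℝ)^t/(t:ℝ)^t := by
      have := count_cliques t ht1 (by omega) (graphOf E) hGfree _ (tEdges_clique E hcp)
      rwa [div_pow] at this
    have hsmall : ((E.filter (fun e => e.card ≠ t)).card : ℝ) ≤ (t:ℝ) * (n:ℝ)^(t-1) := by
      have h1 : (E.filter (fun e => e.card ≠ t)).card ≤ ∑ s ∈ range t, n.choose s :=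
        smallEdges_bound E hlet
      have h2 : ∑ s ∈ range t, n.choose s ≤ t * n^(t-1) := by
        calc ∑ s ∈ range t, n.choose s ≤ ∑ s ∈ range t, n^(t-1) := by
              apply Finset.sum_le_sum
              intro s hs
              exact le_trans (Nat.choose_le_pow n s)
                (Nat.pow_le_pow_right (by omega) (by have := Finset.mem_range.mp hs; omega))
          _ = t * n^(t-1) := by rw [Finset.sum_const, Finset.card_range, smul_eq_mul]
        done
      calc ((E.filter (fun e => e.card ≠ t)).card : ℝ) ≤ ((t * n^(t-1) : ℕ) : ℝ) := by
            exact_mod_cast le_trans h1 h2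
        _ = (t:ℝ) * (n:ℝ)^(t-1) := by push_cast; ring
    have httpow : (1:ℝ) ≤ (t:ℝ)^t := one_le_pow₀ (by exact_mod_cast ht1)
    have hhalf : (n:ℝ)/2 ≤ (n:ℝ) - t := by linarith
    have hdesc_big : (n:ℝ)^t/(2:ℝ)^t ≤ (n.descFactorial t : ℝ) := by
      calc (n:ℝ)^t/(2:ℝ)^t = ((n:ℝ)/2)^t := by rw [div_pow]
        _ ≤ ((n:ℝ)-t)^t := pow_le_pow_left₀ (by positivity) hhalf t
        _ ≤ _ := hdesc_ge
    have hstep1 : ((t:ℝ)+(t:ℝ)^2)*2^t*(t:ℝ)^t * (n:ℝ)^(t-1) ≤ ε * (n:ℝ)^t := by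
      have hfac : ((t:ℝ)+(t:ℝ)^2)*2^t*(t:ℝ)^t ≤ ε * n := by
        have hB : (0:ℝ) ≤ (t:ℝ)^2 := by positivity
        linarith
      calc ((t:ℝ)+(t:ℝ)^2)*2^t*(t:ℝ)^t * (n:ℝ)^(t-1) ≤ (ε*n) * (n:ℝ)^(t-1) :=
            mul_le_mul_of_nonneg_right hfac hppos
        _ = ε * (n:ℝ)^t := by rw [hnn]; ring
    have herr : ((t:ℝ) + (t:ℝ)^2) * (n:ℝ)^(t-1) ≤ ε * (n.descFactorial t : ℝ)/(t:ℝ)^t := by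
      rw [le_div_iff₀ (by positivity : (0:ℝ) < (t:ℝ)^t)]
      have h2pos : (0:ℝ) < (2:ℝ)^t := by positivity
      calc ((t:ℝ)+(t:ℝ)^2) * (n:ℝ)^(t-1) * (t:ℝ)^t
          = (((t:ℝ)+(t:ℝ)^2)*2^t*(t:ℝ)^t * (n:ℝ)^(t-1)) / 2^t := by
            field_simp
        _ ≤ (ε * (n:ℝ)^t)/2^t := by gcongr
        _ = ε * ((n:ℝ)^t/2^t) := by ring
        _ ≤ ε * (n.descFactorial t : ℝ) := mul_le_mul_of_nonneg_left hdesc_big hε.le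
    have hdesc0 : (0:ℝ) ≤ (n.descFactorial t : ℝ) := Nat.cast_nonneg _
    have htt2 : (t:ℝ)^2 * (n:ℝ)^(t-1)/(t:ℝ)^t ≤ (t:ℝ)^2 * (n:ℝ)^(t-1) :=
      div_le_self (by positivity) httpow
    calc (E.card : ℝ)
        = ((E.filter (fun e => e.card = t)).card : ℝ)
          + ((E.filter (fun e => e.card ≠ t)).card : ℝ) := by exact_mod_cast hsplit
      _ ≤ (n:ℝ)^t/(t:ℝ)^t + (t:ℝ) * (n:ℝ)^(t-1) := add_le_add hT hsmall
      _ ≤ ((n.descFactorial t : ℝ) + (t:ℝ)^2 * (n:ℝ)^(t-1))/(t:ℝ)^t + (t:ℝ) * (n:ℝ)^(t-1) := by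
          gcongr
          linarith [hpow_bound, hdesc_ge]
      _ = (n.descFactorial t : ℝ)/(t:ℝ)^t + (t:ℝ)^2 * (n:ℝ)^(t-1)/(t:ℝ)^t
          + (t:ℝ) * (n:ℝ)^(t-1) := by ring
      _ ≤ (n.descFactorial t : ℝ)/(t:ℝ)^t + ((t:ℝ) + (t:ℝ)^2) * (n:ℝ)^(t-1) := by linarith
      _ ≤ (n.descFactorial t : ℝ)/(t:ℝ)^t + ε * (n.descFactorial t : ℝ)/(t:ℝ)^t := by linarith
      _ = (1+ε) * ((n.descFactorial t : ℝ)/(t:ℝ)^t) := by ring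
      _ = (1 + ε) * ((t.factorial : ℝ) / (t : ℝ) ^ t) * (n.choose t : ℝ) := by
          rw [mul_assoc, hkey]
end

section
/- Let k ≥ 2 and t ≥ k+2 be integers and let N(n) denote the maximum, over all k-uniform hypergraphs G on n vertices containing no set of t vertices all of whose k-element subsets are edges of G, of the number of (t−1)-element vertex sets all of whose k-element subsets are edges of G (i.e., N(n) = ex(n, K_{t−1}^{(k)}, K_t^{(k)})). For every ε > 0 there is n0 ∈ ℕ such that for every n ≥ n0, (1−ε)·N(n) ≤ ex(n, K(t,k)) ≤ (1+ε)·N(n). -/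
open Finset

/-- `ex(n, K_{t-1}^{(k)}, K_t^{(k)})`: the maximum number of `(t−1)`-sets all of whose
`k`-subsets are edges, over `k`-uniform hypergraphs on `n` vertices in which no `t`-set
has all its `k`-subsets as edges -/
noncomputable def exGen (k t n : ℕ) : ℕ :=
  sSup {m | ∃ E : Finset (Finset (Fin n)),
    (∀ e ∈ E, e.card = k) ∧
    (¬ ∃ T : Finset (Fin n), T.card = t ∧ ∀ s ∈ T.powersetCard k, s ∈ E) ∧
    (((Finset.univ : Finset (Fin n)).powersetCard (t - 1)).filter
      (fun S => ∀ s ∈ S.powersetCard k, s ∈ E)).card = m}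


lemma hasCopy_of_clique {n t k : ℕ} (hkt : k ≤ t) {E : Finset (Finset (Fin n))}
    (hE : IsComplex E) {T : Finset (Fin n)} (hT : T.card = t)
    (hcl : ∀ s ∈ T.powersetCard k, s ∈ E) : HasCopy (Kcomplex t k) E := by
  refine ⟨fun i => (T.equivFin.symm (Fin.cast hT.symm i) : Fin n), ?_, ?_⟩
  · intro a b hab
    have h2 := T.equivFin.symm.injective (Subtype.val_injective hab)
    exact Fin.val_injective (by simpa using congrArg Fin.val h2)
  · intro e he
    rw [Kcomplex, mem_filter] at he
    set f : Fin t → Fin n := fun i => (T.equivFin.symm (Fin.cast hT.symm i) : Fin n) with hf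
    have hsub : e.image f ⊆ T := by
      intro x hx
      obtain ⟨i, _, rfl⟩ := mem_image.1 hx
      exact (T.equivFin.symm (Fin.cast hT.symm i)).2
    have hcard : (e.image f).card ≤ k := le_trans card_image_le he.2
    obtain ⟨s, hs1, hs2, hs3⟩ := exists_subsuperset_card_eq hsub hcard (by rw [hT]; exact hkt)
    exact hE s (hcl s (mem_powersetCard.2 ⟨hs2, hs3⟩)) _ hs1

lemma bddSC {n : ℕ} {α : Type*} (F : Finset (Finset α)) :
    BddAbove {m | ∃ E : Finset (Finset (Fin n)), IsComplex E ∧ ¬ HasCopy F E ∧ E.card = m} := by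
  refine ⟨Fintype.card (Finset (Fin n)), ?_⟩
  rintro m ⟨E, _, _, rfl⟩
  exact card_le_univ E

lemma bddGen {k t n : ℕ} :
    BddAbove {m | ∃ E : Finset (Finset (Fin n)),
    (∀ e ∈ E, e.card = k) ∧
    (¬ ∃ T : Finset (Fin n), T.card = t ∧ ∀ s ∈ T.powersetCard k, s ∈ E) ∧
    (((Finset.univ : Finset (Fin n)).powersetCard (t - 1)).filter
      (fun S => ∀ s ∈ S.powersetCard k, s ∈ E)).card = m} := by
  refine ⟨Fintype.card (Finset (Fin n)), ?_⟩
  rintro m ⟨E, _, _, rfl⟩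
  exact card_le_univ _

lemma exGen_le_exSC {k t n : ℕ} : exGen k t n ≤ exSC n (Kcomplex t k) := by
  apply csSup_le'
  rintro m ⟨G, hGu, hGfree, hGm⟩
  set C := ((univ : Finset (Fin n)).powersetCard (t-1)).filter
      (fun S => ∀ s ∈ S.powersetCard k, s ∈ G) with hC
  set E := dClosure C with hEdef
  have hEcomplex : IsComplex E := by
    intro e he f hf
    obtain ⟨S, hS, hsub⟩ := mem_biUnion.1 he
    exact mem_biUnion.2 ⟨S, hS, mem_powerset.2 (hf.trans (mem_powerset.1 hsub))⟩
  have hCE : C ⊆ E := fun S hS => mem_biUnion.2 ⟨S, hS, mem_powerset_self S⟩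
  have hfree : ¬ HasCopy (Kcomplex t k) E := by
    rintro ⟨f, hfinj, hfmap⟩
    apply hGfree
    refine ⟨univ.image f, by rw [card_image_of_injective _ hfinj, card_univ, Fintype.card_fin], ?_⟩
    intro s hs
    rw [mem_powersetCard] at hs
    obtain ⟨s', hs'sub, rfl⟩ := subset_image_iff.1 hs.1
    have hcard : s'.card ≤ k := by
      rw [card_image_of_injective _ hfinj] at hs; exact hs.2.le
    have hmem : s' ∈ Kcomplex t k := mem_filter.2 ⟨mem_powerset.2 (subset_univ _), hcard⟩
    obtain ⟨S, hS, hsub⟩ := mem_biUnion.1 (hfmap s' hmem)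
    exact (mem_filter.1 hS).2 _ (mem_powersetCard.2 ⟨mem_powerset.1 hsub, hs.2⟩)
  calc m = C.card := hGm.symm
    _ ≤ E.card := card_le_card hCE
    _ ≤ _ := le_csSup (bddSC _) ⟨E, hEcomplex, hfree, rfl⟩

lemma exSC_le {k t n : ℕ} (hk : 2 ≤ k) (ht : k + 2 ≤ t) :
    exSC n (Kcomplex t k) ≤ exGen k t n +
      ((univ : Finset (Finset (Fin n))).filter (fun s => s.card ≤ t-2)).card := by
  apply csSup_le'
  rintro m ⟨E, hEc, hEfree, rfl⟩
  set G := E.filter (fun e => e.card = k) with hG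
  have hGu : ∀ e ∈ G, e.card = k := fun e he => (mem_filter.1 he).2
  have hGfree : ¬ ∃ T : Finset (Fin n), T.card = t ∧ ∀ s ∈ T.powersetCard k, s ∈ G := by
    rintro ⟨T, hT, hcl⟩
    exact hEfree (hasCopy_of_clique (by omega) hEc hT (fun s hs => (mem_filter.1 (hcl s hs)).1))
  set C := ((univ : Finset (Fin n)).powersetCard (t-1)).filter
      (fun S => ∀ s ∈ S.powersetCard k, s ∈ G) with hC
  have hsmall : ∀ e ∈ E, e.card ≤ t - 1 := by
    intro e he
    by_contra hlt
    push_neg at hlt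
    obtain ⟨T, hTe, hT⟩ := exists_subset_card_eq (show t ≤ e.card by omega)
    exact hEfree (hasCopy_of_clique (by omega) hEc hT
      (fun s hs => hEc e he s ((mem_powersetCard.1 hs).1.trans hTe)))
  have h1 : E.filter (fun e => e.card = t-1) ⊆ C := by
    intro S hS
    obtain ⟨hSE, hScard⟩ := mem_filter.1 hS
    refine mem_filter.2 ⟨mem_powersetCard.2 ⟨subset_univ _, hScard⟩, fun s hs => ?_⟩
    obtain ⟨hssub, hscard⟩ := mem_powersetCard.1 hs
    exact mem_filter.2 ⟨hEc S hSE s hssub, hscard⟩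
  have h2 : E.filter (fun e => ¬ e.card = t-1) ⊆
      (univ : Finset (Finset (Fin n))).filter (fun s => s.card ≤ t-2) := by
    intro e he
    obtain ⟨heE, hne⟩ := mem_filter.1 he
    exact mem_filter.2 ⟨mem_univ _, by have := hsmall e heE; omega⟩
  have hCle : C.card ≤ exGen k t n := le_csSup bddGen ⟨G, hGu, hGfree, rfl⟩
  calc E.card
      = (E.filter (fun e => e.card = t-1)).card + (E.filter (fun e => ¬ e.card = t-1)).card :=
        (card_filter_add_card_filter_not (p := fun e : Finset (Fin n) => e.card = t-1)).symm
    _ ≤ exGen k t n + _ := add_le_add (le_trans (card_le_card h1) hCle) (card_le_card h2)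

lemma low_bound {n t : ℕ} (hn : 1 ≤ n) (ht : 2 ≤ t) :
    ((univ : Finset (Finset (Fin n))).filter (fun s => s.card ≤ t-2)).card ≤ (t-1) * n^(t-2) := by
  have hsub : (univ : Finset (Finset (Fin n))).filter (fun s => s.card ≤ t-2) ⊆
      (range (t-1)).biUnion (fun i => (univ : Finset (Fin n)).powersetCard i) := by
    intro s hs
    have := (mem_filter.1 hs).2
    exact mem_biUnion.2 ⟨s.card, mem_range.2 (by omega), mem_powersetCard.2 ⟨subset_univ _, rfl⟩⟩
  calc _ ≤ ((range (t-1)).biUnion (fun i => (univ : Finset (Fin n)).powersetCard i)).card :=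
        card_le_card hsub
    _ ≤ ∑ i ∈ range (t-1), ((univ : Finset (Fin n)).powersetCard i).card := card_biUnion_le
    _ ≤ ∑ i ∈ range (t-1), n^(t-2) := by
        apply Finset.sum_le_sum
        intro i hi
        rw [card_powersetCard, card_univ, Fintype.card_fin]
        calc n.choose i ≤ n^i := Nat.choose_le_pow n i
          _ ≤ n^(t-2) := Nat.pow_le_pow_right hn (by have := mem_range.1 hi; omega)
    _ = (t-1) * n^(t-2) := by rw [Finset.sum_const, card_range, smul_eq_mul]

lemma gen_lower {k t n : ℕ} (hk : 2 ≤ k) (ht : k + 2 ≤ t) :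
    (n / (t-1))^(t-1) ≤ exGen k t n := by
  set c := t - 1 with hc
  set M := n / c with hM
  have hcpos : 0 < c := by omega
  have hMc : M * c ≤ n := Nat.div_mul_le_self n c
  set col : Fin n → ℕ := fun v => v.val % c with hcol
  set G0 : Finset (Finset (Fin n)) := ((univ : Finset (Fin n)).powersetCard k).filter
    (fun s => ∀ a ∈ s, ∀ b ∈ s, col a = col b → a = b) with hG0
  have hGu : ∀ e ∈ G0, e.card = k := fun e he => (mem_powersetCard.1 (mem_filter.1 he).1).2
  have hGfree : ¬ ∃ T : Finset (Fin n), T.card = t ∧ ∀ s ∈ T.powersetCard k, s ∈ G0 := by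
    rintro ⟨T, hT, hcl⟩
    obtain ⟨a, ha, b, hb, hab, hcolab⟩ :=
      Finset.exists_ne_map_eq_of_card_lt_of_maps_to (t := range c)
        (by rw [hT, card_range]; omega) (fun x _ => mem_range.2 (Nat.mod_lt _ hcpos))
    have hpair : ({a, b} : Finset (Fin n)) ⊆ T := by
      intro x hx; rcases mem_insert.1 hx with rfl | hx
      · exact ha
      · exact (mem_singleton.1 hx) ▸ hb
    obtain ⟨s, hs1, hs2, hs3⟩ := exists_subsuperset_card_eq (n := k) hpair
      (by rw [card_pair hab]; omega) (by rw [hT]; omega)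
    have hsG := hcl s (mem_powersetCard.2 ⟨hs2, hs3⟩)
    exact hab ((mem_filter.1 hsG).2 a (hs1 (mem_insert_self a _)) b
      (hs1 (mem_insert_of_mem (mem_singleton_self b))) hcolab)
  set C0 := ((univ : Finset (Fin n)).powersetCard (t-1)).filter
      (fun S => ∀ s ∈ S.powersetCard k, s ∈ G0) with hC0
  have key : M^c ≤ C0.card := by
    have hvlt : ∀ (i : Fin c) (a : Fin M), a.val * c + i.val < n := by
      intro i a
      have h1 : (a.val + 1) * c ≤ M * c := Nat.mul_le_mul_right c a.isLt
      have h2 : a.val * c + i.val < (a.val + 1) * c := by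
        have := i.isLt; rw [add_mul, one_mul]; omega
      omega
    set vert : Fin c → Fin M → Fin n := fun i a => ⟨a.val * c + i.val, hvlt i a⟩ with hvert
    have hcolv : ∀ (i : Fin c) (a : Fin M), col (vert i a) = i.val := by
      intro i a
      show (a.val * c + i.val) % c = i.val
      rw [Nat.add_mod, Nat.mul_mod_left, Nat.zero_add, Nat.mod_eq_of_lt i.isLt,
        Nat.mod_eq_of_lt i.isLt]
    set φ : (Fin c → Fin M) → Finset (Fin n) := fun g => univ.image (fun i => vert i (g i))
      with hφ
    have hmem : ∀ g, φ g ∈ C0 := by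
      intro g
      have hinj : Function.Injective (fun i => vert i (g i)) := by
        intro i j hij
        have h2 : col (vert i (g i)) = col (vert j (g j)) := congrArg col hij
        rw [hcolv, hcolv] at h2
        have this := h2
        exact Fin.val_injective this
      have hcard : (φ g).card = t - 1 := by
        rw [hφ]; simp only []
        rw [card_image_of_injective _ hinj, card_univ, Fintype.card_fin]
      have hcolinj : ∀ a ∈ φ g, ∀ b ∈ φ g, col a = col b → a = b := by
        intro a ha b hb hab
        obtain ⟨i, _, rfl⟩ := mem_image.1 ha
        obtain ⟨j, _, rfl⟩ := mem_image.1 hb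
        rw [hcolv, hcolv] at hab
        rw [Fin.val_injective hab]
      refine mem_filter.2 ⟨mem_powersetCard.2 ⟨subset_univ _, hcard⟩, fun s hs => ?_⟩
      obtain ⟨hssub, hscard⟩ := mem_powersetCard.1 hs
      exact mem_filter.2 ⟨mem_powersetCard.2 ⟨subset_univ _, hscard⟩,
        fun a ha b hb hab => hcolinj a (hssub ha) b (hssub hb) hab⟩
    have hφinj : Function.Injective φ := by
      intro g g' hgg
      funext i
      have h1 : vert i (g i) ∈ φ g' := by
        rw [← hgg]; exact mem_image_of_mem _ (mem_univ i)
      obtain ⟨j, _, hj⟩ := mem_image.1 h1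
      have hij : j = i := by
        have := congrArg col hj
        rw [hcolv, hcolv] at this
        exact Fin.val_injective this
      subst hij
      have := congrArg Fin.val hj
      simp only [hvert] at this
      have hval : (g' j).val = (g j).val := Nat.eq_of_mul_eq_mul_right hcpos (by omega)
      exact (Fin.val_injective hval).symm
    calc M^c = Fintype.card (Fin c → Fin M) := by
          rw [Fintype.card_fun, Fintype.card_fin, Fintype.card_fin]
      _ = (univ.image φ).card := by
          rw [card_image_of_injective _ hφinj, card_univ]
      _ ≤ C0.card := card_le_card (by intro x hx; obtain ⟨g, _, rfl⟩ := mem_image.1 hx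
                                      exact hmem g)
  exact key.trans (le_csSup bddGen ⟨G0, hGu, hGfree, rfl⟩)

theorem statement10 (k t : ℕ) (hk : 2 ≤ k) (ht : k + 2 ≤ t) (ε : ℝ) (hε : 0 < ε) :
    ∃ n0 : ℕ, ∀ n : ℕ, n0 ≤ n →
      (1 - ε) * (exGen k t n : ℝ) ≤ (exSC n (Kcomplex t k) : ℝ) ∧
      (exSC n (Kcomplex t k) : ℝ) ≤ (1 + ε) * (exGen k t n : ℝ) := by
  set c := t - 1 with hc
  have hc3 : 3 ≤ c := by omega
  refine ⟨max (2*c) ⌈((c:ℝ))*(2*c)^c/ε⌉₊ + 1, fun n hn => ?_⟩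
  have hn1 : 1 ≤ n := by omega
  have hn2c : 2*c ≤ n := by
    have := le_max_left (2*c) ⌈((c:ℝ))*(2*c)^c/ε⌉₊; omega
  have hceil : ⌈((c:ℝ))*(2*c)^c/ε⌉₊ ≤ n := by
    have := le_max_right (2*c) ⌈((c:ℝ))*(2*c)^c/ε⌉₊; omega
  have hxn : ((c:ℝ))*(2*c)^c/ε ≤ (n:ℝ) := Nat.ceil_le.1 hceil
  have hgen0 : (0:ℝ) ≤ (exGen k t n : ℝ) := Nat.cast_nonneg _
  have hle1 : (exGen k t n : ℝ) ≤ (exSC n (Kcomplex t k) : ℝ) :=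
    Nat.cast_le.2 exGen_le_exSC
  constructor
  · nlinarith [mul_nonneg hε.le hgen0]
  · set M := n / c with hM
    have hnat : n ≤ 2 * (c * M) := by
      have h1 : c * M + n % c = n := Nat.div_add_mod n c
      have h2 : n % c < c := Nat.mod_lt _ (by omega)
      omega
    have hMreal : (n:ℝ) ≤ 2*(c:ℝ)*(M:ℝ) := by exact_mod_cast hnat.trans_eq (mul_assoc 2 c M).symm
    have hpow1 : ((n:ℝ))^c ≤ (2*(c:ℝ))^c * (M:ℝ)^c := by
      calc ((n:ℝ))^c ≤ (2*(c:ℝ)*(M:ℝ))^c :=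
            pow_le_pow_left₀ (Nat.cast_nonneg n) hMreal c
        _ = (2*(c:ℝ))^c * (M:ℝ)^c := mul_pow _ _ _
    have h2 : (c:ℝ)*(2*(c:ℝ))^c ≤ ε*(n:ℝ) := by
      rw [div_le_iff₀ hε] at hxn
      calc (c:ℝ)*(2*(c:ℝ))^c = (c:ℝ)*(2*(c:ℝ))^c := rfl
        _ ≤ (n:ℝ)*ε := by exact_mod_cast hxn
        _ = ε*(n:ℝ) := mul_comm _ _
    have h3 : ((n:ℝ))^c = (n:ℝ) * (n:ℝ)^(t-2) := by
      rw [show c = (t-2)+1 from by omega, pow_succ']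
    have hpos : (0:ℝ) < (2*(c:ℝ))^c := by positivity
    have key : (c:ℝ) * (n:ℝ)^(t-2) ≤ ε * (M:ℝ)^c := by
      rw [← mul_le_mul_iff_of_pos_right hpos]
      have e1 : ε * ((n:ℝ))^c ≤ ε * ((2*(c:ℝ))^c * (M:ℝ)^c) :=
        mul_le_mul_of_nonneg_left hpow1 hε.le
      have e2 : (c:ℝ)*(2*(c:ℝ))^c*(n:ℝ)^(t-2) ≤ ε*(n:ℝ)*(n:ℝ)^(t-2) :=
        mul_le_mul_of_nonneg_right h2 (by positivity)
      calc (c:ℝ) * (n:ℝ)^(t-2) * (2*(c:ℝ))^c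
          = (c:ℝ)*(2*(c:ℝ))^c*(n:ℝ)^(t-2) := by ring
        _ ≤ ε*(n:ℝ)*(n:ℝ)^(t-2) := e2
        _ = ε * ((n:ℝ))^c := by rw [h3]; ring
        _ ≤ ε * ((2*(c:ℝ))^c * (M:ℝ)^c) := e1
        _ = ε * (M:ℝ)^c * (2*(c:ℝ))^c := by ring
    have hgenlow : (M:ℕ)^c ≤ exGen k t n := by
      have := gen_lower (n := n) hk ht
      rw [← hc] at this
      exact this
    have hgenlowR : ((M:ℝ))^c ≤ (exGen k t n : ℝ) := by exact_mod_cast hgenlow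
    have h4 : exSC n (Kcomplex t k) ≤ exGen k t n + c * n ^ (t - 2) := by
      refine (exSC_le hk ht).trans (Nat.add_le_add_left ?_ _)
      have := low_bound (n := n) (t := t) hn1 (by omega)
      rw [← hc] at this
      exact this
    have h4R : (exSC n (Kcomplex t k) : ℝ) ≤ (exGen k t n : ℝ) + (c:ℝ) * (n:ℝ)^(t-2) := by
      exact_mod_cast h4
    have h5 : ε * (M:ℝ)^c ≤ ε * (exGen k t n : ℝ) :=
      mul_le_mul_of_nonneg_left hgenlowR hε.le
    nlinarith
end

section
/- If H is a B-free simplicial complex, then for every vertex v of H there are no four distinct vertices a, b, c, d such that {a,b}, {b,c} and {c,d} are all 2-edges of the link L_v (i.e., no link contains a 2-uniform path with three edges). -/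
open Finset

/-- the complex `B`: downward closure of `{{v3,v4},{v1,v2,v3},{v1,v4,v5}}`
(vertices `v1,…,v5` are `0,…,4`) -/
def B : Finset (Finset (Fin 5)) :=
  dClosure {{2, 3}, {0, 1, 2}, {0, 3, 4}}

/-- edge set of the link `L_v` -/
def linkEdges {V : Type*} [DecidableEq V] (E : Finset (Finset V)) (v : V) :
    Finset (Finset V) :=
  (E.filter (fun e => v ∈ e)).image (fun e => e.erase v)

/-- `d^(i)(u)`: number of `i`-edges containing `u` -/
def degI {V : Type*} [DecidableEq V] (E : Finset (Finset V)) (i : ℕ) (u : V) : ℕ :=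
  (E.filter (fun e => u ∈ e ∧ e.card = i)).card

/-- `d(u)`: number of edges of size at least 2 containing `u` -/
def dDeg {V : Type*} [DecidableEq V] (E : Finset (Finset V)) (u : V) : ℕ :=
  (E.filter (fun e => u ∈ e ∧ 2 ≤ e.card)).card

theorem statement11 {V : Type*} [DecidableEq V] (E : Finset (Finset V))
    (hcplx : IsComplex E) (hfree : ¬ HasCopy B E) (v : V) :
    ¬ ∃ a b c d : V, a ≠ b ∧ a ≠ c ∧ a ≠ d ∧ b ≠ c ∧ b ≠ d ∧ c ≠ d ∧
      ({a, b} : Finset V) ∈ linkEdges E v ∧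
      ({b, c} : Finset V) ∈ linkEdges E v ∧
      ({c, d} : Finset V) ∈ linkEdges E v := by
  rintro ⟨a, b, c, d, hab, hac, had, hbc, hbd, hcd, h1, h2, h3⟩
  have key : ∀ x y : V, ({x, y} : Finset V) ∈ linkEdges E v →
      v ≠ x ∧ v ≠ y ∧ ({v, x, y} : Finset V) ∈ E := by
    intro x y hxy
    simp only [linkEdges, mem_image, mem_filter] at hxy
    obtain ⟨e, ⟨he, hve⟩, heq⟩ := hxy
    have hvx : v ≠ x := by
      intro h; have := Finset.notMem_erase v e; rw [heq] at this; simp [h] at this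
    have hvy : v ≠ y := by
      intro h; have := Finset.notMem_erase v e; rw [heq] at this; simp [h] at this
    refine ⟨hvx, hvy, ?_⟩
    have : ({v, x, y} : Finset V) = e := by
      rw [← heq, Finset.insert_erase hve]
    rwa [this]
  obtain ⟨hva, hvb, e1⟩ := key a b h1
  obtain ⟨_, hvc, e2⟩ := key b c h2
  obtain ⟨_, hvd, e3⟩ := key c d h3
  have ebc : ({b, c} : Finset V) ∈ E := by
    apply hcplx _ e2
    intro x hx; simp only [mem_insert, mem_singleton] at hx
    rcases hx with h | h <;> simp [h]
  apply hfree
  refine ⟨![v, a, b, c, d], ?_, ?_⟩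
  · intro i j hij
    fin_cases i <;> fin_cases j <;>
      simp_all
  · intro e he
    have hB : e ⊆ {2, 3} ∨ e ⊆ {0, 1, 2} ∨ e ⊆ {0, 3, 4} := by
      simp only [B, dClosure, mem_biUnion, mem_powerset] at he
      obtain ⟨s, hs, hes⟩ := he
      simp only [mem_insert, mem_singleton] at hs
      rcases hs with h | h | h <;> subst h <;> tauto
    have himg : ∀ (s : Finset (Fin 5)) , e ⊆ s → e.image ![v,a,b,c,d] ⊆ s.image ![v,a,b,c,d] :=
      fun s hs => Finset.image_subset_image hs
    rcases hB with h | h | h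
    · apply hcplx _ ebc
      refine (himg _ h).trans ?_
      intro x hx; simp [Matrix.cons_val_fin_one] at hx ⊢
      rcases hx with h | h <;> simp [h]
    · apply hcplx _ e1
      refine (himg _ h).trans ?_
      intro x hx; simp at hx ⊢
      rcases hx with h | h | h <;> simp [h]
    · apply hcplx _ e3
      refine (himg _ h).trans ?_
      intro x hx; simp at hx ⊢
      rcases hx with h | h | h <;> simp [h]
end

section
/- There is n0 ∈ ℕ such that the following holds for every n ≥ n0: if H is a B-free simplicial complex on n vertices in which every vertex u satisfies d(u) > (9/8)(n−1) + 5/16, then H contains no edge of size 4, and consequently every edge of H has size at most 3. -/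
open Finset

/-!
Let `Q` be a 4-edge and `p ∈ Q`. Three consequences of B-freeness drive the count:
no 3-edge has two vertices in `Q` and one outside; the graph of 2-edges of the link `L_p`
contains no path on four vertices, so every edge at `p` of size at least 3 contains a vertex
`a ∉ Q` with at most two link neighbours, and hence at most 3 such edges contain both `p` and
`a`; and a vertex `a ∉ Q` that is non-isolated in the link graph of `p` is joined to no other
vertex of `Q`. Charging each edge at `p` that is not inside `Q` to such an outside vertex, every
`a ∉ Q` is charged at most 4 in total by the vertices of `Q`, so `∑_{p ∈ Q} d(p) ≤ 4n + 48`,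
which contradicts `d(p) > 9/8 (n - 1) + 5/16` once `n ≥ 103`.
-/

section Complex

variable {V : Type*} [DecidableEq V] {E : Finset (Finset V)}

lemma IsComplex.pair_mem (hE : IsComplex E) {e : Finset V} (he : e ∈ E) {x y : V}
    (hx : x ∈ e) (hy : y ∈ e) : {x, y} ∈ E :=
  hE e he _ (by simp [insert_subset_iff, hx, hy])

lemma IsComplex.triple_mem (hE : IsComplex E) {e : Finset V} (he : e ∈ E) {x y z : V}
    (hx : x ∈ e) (hy : y ∈ e) (hz : z ∈ e) : {x, y, z} ∈ E :=
  hE e he _ (by simp [insert_subset_iff, hx, hy, hz])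

lemma IsComplex.card_lt_of_not_exists_card_eq (hE : IsComplex E) {k : ℕ}
    (hk : ¬ ∃ e ∈ E, e.card = k) {e : Finset V} (he : e ∈ E) : e.card < k := by
  by_contra! hke
  obtain ⟨f, hfe, hf⟩ := exists_subset_card_eq hke
  exact hk ⟨f, hE e he f hfe, hf⟩

lemma hasCopy_dClosure {α : Type*} [DecidableEq α] {S : Finset (Finset α)} (hE : IsComplex E)
    {f : α → V} (hf : f.Injective) (hS : ∀ s ∈ S, s.image f ∈ E) : HasCopy (dClosure S) E := by
  refine ⟨f, hf, fun e he => ?_⟩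
  obtain ⟨s, hs, hes⟩ := mem_biUnion.1 he
  exact hE _ (hS s hs) _ (image_subset_image (mem_powerset.1 hes))

lemma hasCopy_B (hE : IsComplex E) {p a b c d : V} (hnd : [p, a, b, c, d].Nodup)
    (hpab : {p, a, b} ∈ E) (hpcd : {p, c, d} ∈ E) (hbc : {b, c} ∈ E) : HasCopy B E := by
  refine hasCopy_dClosure hE (f := ![p, a, b, c, d]) ?_ ?_
  · simp only [List.nodup_cons, List.mem_cons, List.not_mem_nil] at hnd
    intro i j hij
    fin_cases i <;> fin_cases j <;> simp_all
  · simpa [image_insert] using ⟨hbc, hpab, hpcd⟩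

end Complex

section FourEdge

variable {V : Type*} [DecidableEq V] {E : Finset (Finset V)} (hE : IsComplex E)
  (hB : ¬ HasCopy B E) {Q : Finset V} (hQ : Q ∈ E) (hQ4 : 4 ≤ Q.card)

include hE hB hQ hQ4

lemma triple_notMem_of_two_mem {x y a : V} (hx : x ∈ Q) (hy : y ∈ Q) (hxy : x ≠ y)
    (ha : a ∉ Q) : {x, y, a} ∉ E := by
  intro hxya
  obtain ⟨t, ht, htxy⟩ := exists_mem_notMem_of_card_lt_card (s := {x, y})
    (card_le_two.trans_lt (by omega : 2 < Q.card))
  obtain ⟨s, hs, hsxyt⟩ := exists_mem_notMem_of_card_lt_card (s := {x, y, t})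
    (card_le_three.trans_lt (by omega : 3 < Q.card))
  refine hB (hasCopy_B hE ?_ (hE.triple_mem hQ hx ht hs) hxya (hE.pair_mem hQ hs hy))
  have := ne_of_mem_of_not_mem hx ha
  have := ne_of_mem_of_not_mem hy ha
  have := ne_of_mem_of_not_mem ht ha
  have := ne_of_mem_of_not_mem hs ha
  simp only [mem_insert, mem_singleton, not_or] at htxy hsxyt
  simp [*, Ne.symm htxy.1, Ne.symm hsxyt.1, Ne.symm hsxyt.2.2]

lemma notMem_of_mem_of_not_subset {p : V} (hp : p ∈ Q) {e : Finset V} (he : e ∈ E)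
    (hpe : p ∈ e) (heQ : ¬ e ⊆ Q) {a : V} (ha : a ∈ e) (hap : a ≠ p) : a ∉ Q := by
  intro haQ
  obtain ⟨b, hb, hbQ⟩ := not_subset.1 heQ
  exact triple_notMem_of_two_mem hE hB hQ hQ4 hp haQ (Ne.symm hap) hbQ
    (hE.triple_mem he hpe ha hb)

end FourEdge

section Link

variable {V : Type*} [DecidableEq V] [Fintype V] {E : Finset (Finset V)}

/-- The neighbourhood of `a` in the graph of 2-edges of the link `L_p`. -/
def linkNbr (E : Finset (Finset V)) (p a : V) : Finset V :=
  univ.filter fun b => a ≠ p ∧ b ≠ p ∧ a ≠ b ∧ {p, a, b} ∈ E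

lemma mem_linkNbr {p a b : V} :
    b ∈ linkNbr E p a ↔ a ≠ p ∧ b ≠ p ∧ a ≠ b ∧ {p, a, b} ∈ E := by
  simp [linkNbr]

lemma mem_linkNbr_comm {p a b : V} : b ∈ linkNbr E p a ↔ a ∈ linkNbr E p b := by
  simp only [mem_linkNbr, pair_comm a b]
  tauto

lemma IsComplex.pair_mem_of_mem_linkNbr (hE : IsComplex E) {p a b : V}
    (hb : b ∈ linkNbr E p a) : {p, a} ∈ E :=
  hE.pair_mem (mem_linkNbr.1 hb).2.2.2 (by simp) (by simp)

variable (hE : IsComplex E) (hB : ¬ HasCopy B E)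

include hE hB

lemma linkGraph_path_free {p a b c d : V} (hb : b ∈ linkNbr E p a) (hc : c ∈ linkNbr E p b)
    (hd : d ∈ linkNbr E p c) (hac : a ≠ c) (had : a ≠ d) (hbd : b ≠ d) : False := by
  rw [mem_linkNbr] at hb hc hd
  obtain ⟨hap, hbp, hab, hpab⟩ := hb
  obtain ⟨-, hcp, hbc, hpbc⟩ := hc
  obtain ⟨-, hdp, hcd, hpcd⟩ := hd
  refine hB (hasCopy_B hE ?_ hpab hpcd (hE.pair_mem hpbc (by simp) (by simp)))
  simp [*, Ne.symm hap, Ne.symm hbp, Ne.symm hcp, Ne.symm hdp]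

lemma card_linkNbr_le_two_or {p a b : V} (hb : b ∈ linkNbr E p a) :
    (linkNbr E p a).card ≤ 2 ∨ (linkNbr E p b).card ≤ 1 := by
  by_contra! h
  obtain ⟨c, hc, hca⟩ := exists_mem_ne h.2 a
  obtain ⟨d, hd, hdbc⟩ :=
    exists_mem_notMem_of_card_lt_card (s := {b, c}) (card_le_two.trans_lt h.1)
  rw [mem_insert, mem_singleton, not_or] at hdbc
  exact linkGraph_path_free hE hB (mem_linkNbr_comm.1 hc) (mem_linkNbr_comm.1 hb) hd hca
    (Ne.symm hdbc.2) (Ne.symm hdbc.1)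

lemma exists_mem_card_linkNbr_le_two {e : Finset V} (he : e ∈ E) {p : V} (hpe : p ∈ e)
    (he3 : 3 ≤ e.card) : ∃ a ∈ e, a ≠ p ∧ (linkNbr E p a).card ≤ 2 := by
  obtain ⟨a, ha, b, hb, hab⟩ :=
    one_lt_card.1 (show 1 < (e.erase p).card by rw [card_erase_of_mem hpe]; omega)
  rw [mem_erase] at ha hb
  have hba : b ∈ linkNbr E p a := mem_linkNbr.2 ⟨ha.1, hb.1, hab, hE.triple_mem he hpe ha.2 hb.2⟩
  rcases card_linkNbr_le_two_or hE hB hba with h | h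
  · exact ⟨a, ha.2, ha.1, h⟩
  · exact ⟨b, hb.2, hb.1, by omega⟩

end Link

section Degree

variable {V : Type*} [DecidableEq V] [Fintype V] {E : Finset (Finset V)}

def linkCharge (E : Finset (Finset V)) (p a : V) : ℕ :=
  (if {p, a} ∈ E then 1 else 0) + 3 * if (linkNbr E p a).Nonempty then 1 else 0

lemma sum_linkCharge (Q : Finset V) (p : V) :
    ∑ a ∈ Qᶜ, linkCharge E p a =
      (Qᶜ.filter fun a => {p, a} ∈ E).card +
        3 * (Qᶜ.filter fun a => (linkNbr E p a).Nonempty).card := by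
  simp only [linkCharge, sum_add_distrib, ← mul_sum, card_filter]

lemma card_filter_two_le {Q : Finset V} {p : V} (hp : p ∈ Q) :
    (E.filter fun e => p ∈ e ∧ e.card = 2 ∧ ¬ e ⊆ Q).card ≤
      (Qᶜ.filter fun a => {p, a} ∈ E).card := by
  refine (card_le_card fun e he => ?_).trans (card_image_le (f := fun a => {p, a}))
  obtain ⟨heE, hpe, he2, heQ⟩ := mem_filter.1 he
  obtain ⟨a, ha⟩ := card_eq_one.1 (show (e.erase p).card = 1 by rw [card_erase_of_mem hpe, he2])
  obtain rfl : e = {p, a} := by rw [← insert_erase hpe, ha]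
  refine mem_image.2 ⟨a, mem_filter.2 ⟨mem_compl.2 fun haQ => heQ ?_, heE⟩, rfl⟩
  simp [insert_subset_iff, hp, haQ]

section

variable (hE : IsComplex E) (hB : ¬ HasCopy B E) {Q : Finset V} (hQ : Q ∈ E)
  (hQ4 : 4 ≤ Q.card)

include hE hB hQ hQ4

lemma pair_notMem_of_linkNbr_nonempty {r q a : V} (hr : r ∈ Q) (hq : q ∈ Q) (hrq : r ≠ q)
    (ha : a ∉ Q) (hN : (linkNbr E r a).Nonempty) : {q, a} ∉ E := by
  intro hqa
  obtain ⟨b, hb⟩ := hN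
  obtain ⟨har, hbr, hab, hrab⟩ := mem_linkNbr.1 hb
  have hbQ : b ∉ Q := notMem_of_mem_of_not_subset hE hB hQ hQ4 hr hrab (by simp)
    (fun h => ha (h (by simp))) (by simp) hbr
  obtain ⟨t, ht, htrq⟩ := exists_mem_notMem_of_card_lt_card (s := {r, q})
    (card_le_two.trans_lt (by omega : 2 < Q.card))
  refine hB (hasCopy_B hE ?_ (hE.triple_mem hQ hr ht hq) hrab hqa)
  have := ne_of_mem_of_not_mem hr ha
  have := ne_of_mem_of_not_mem ht ha
  have := ne_of_mem_of_not_mem hq ha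
  have := ne_of_mem_of_not_mem hr hbQ
  have := ne_of_mem_of_not_mem ht hbQ
  have := ne_of_mem_of_not_mem hq hbQ
  simp only [mem_insert, mem_singleton, not_or] at htrq
  simp [*, Ne.symm htrq.1]

lemma card_filter_ge_three_le {p : V} (hp : p ∈ Q) :
    (E.filter fun e => p ∈ e ∧ 3 ≤ e.card ∧ ¬ e ⊆ Q).card ≤
      3 * (Qᶜ.filter fun a => (linkNbr E p a).Nonempty).card := by
  set L := (Qᶜ.filter fun a => (linkNbr E p a).Nonempty).filter
    fun a => (linkNbr E p a).card ≤ 2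
  have hcover : (E.filter fun e => p ∈ e ∧ 3 ≤ e.card ∧ ¬ e ⊆ Q) ⊆ L.biUnion fun a =>
      ((linkNbr E p a).powerset.erase ∅).image fun s => insert p (insert a s) := by
    intro e he
    obtain ⟨heE, hpe, he3, heQ⟩ := mem_filter.1 he
    obtain ⟨a, hae, hap, haN⟩ := exists_mem_card_linkNbr_le_two hE hB heE hpe he3
    have hrest : (e.erase p).erase a ⊆ linkNbr E p a := by
      intro b hb
      simp only [mem_erase] at hb
      exact mem_linkNbr.2 ⟨hap, hb.2.1, Ne.symm hb.1, hE.triple_mem heE hpe hae hb.2.2⟩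
    have hrest_ne : ((e.erase p).erase a).Nonempty := by
      rw [← card_pos, card_erase_of_mem (mem_erase.2 ⟨hap, hae⟩), card_erase_of_mem hpe]
      omega
    have haQ := notMem_of_mem_of_not_subset hE hB hQ hQ4 hp heE hpe heQ hae hap
    refine mem_biUnion.2 ⟨a, mem_filter.2 ⟨mem_filter.2 ⟨mem_compl.2 haQ,
      hrest_ne.mono hrest⟩, haN⟩, mem_image.2 ⟨_, mem_erase.2 ⟨hrest_ne.ne_empty,
      mem_powerset.2 hrest⟩, ?_⟩⟩
    rw [insert_erase (mem_erase.2 ⟨hap, hae⟩), insert_erase hpe]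
  have hfiber : ∀ a ∈ L, (((linkNbr E p a).powerset.erase ∅).image
      fun s => insert p (insert a s)).card ≤ 3 := by
    intro a ha
    have hpow : 2 ^ (linkNbr E p a).card ≤ 2 ^ 2 :=
      Nat.pow_le_pow_right (by norm_num) (mem_filter.1 ha).2
    calc _ ≤ ((linkNbr E p a).powerset.erase ∅).card := card_image_le
      _ = 2 ^ (linkNbr E p a).card - 1 := by
        rw [card_erase_of_mem (empty_mem_powerset _), card_powerset]
      _ ≤ 3 := by omega
  calc _ ≤ _ := card_le_card hcover
    _ ≤ L.card * 3 := card_biUnion_le_card_mul _ _ _ hfiber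
    _ ≤ _ := by rw [mul_comm]; gcongr; apply filter_subset

end

variable (hE : IsComplex E) (hB : ¬ HasCopy B E) {Q : Finset V} (hQ : Q ∈ E)
  (hQ4 : Q.card = 4)

include hE hB hQ hQ4

lemma dDeg_le_of_mem {p : V} (hp : p ∈ Q) : dDeg E p ≤ 16 + ∑ a ∈ Qᶜ, linkCharge E p a := by
  have hsplit : (E.filter fun e => p ∈ e ∧ 2 ≤ e.card) ⊆ Q.powerset ∪
      (E.filter fun e => p ∈ e ∧ e.card = 2 ∧ ¬ e ⊆ Q) ∪
      (E.filter fun e => p ∈ e ∧ 3 ≤ e.card ∧ ¬ e ⊆ Q) := by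
    intro e he
    simp only [mem_filter, mem_union, mem_powerset] at he ⊢
    by_cases heQ : e ⊆ Q
    · exact Or.inl (Or.inl heQ)
    · rcases he.2.2.eq_or_lt with h | h
      · exact Or.inl (Or.inr ⟨he.1, he.2.1, h.symm, heQ⟩)
      · exact Or.inr ⟨he.1, he.2.1, h, heQ⟩
  calc dDeg E p ≤ _ := card_le_card hsplit
    _ ≤ _ := (card_union_le _ _).trans (add_le_add_left (card_union_le _ _) _)
    _ ≤ _ := by
      have h2 := card_filter_two_le (E := E) hp
      have h3 := card_filter_ge_three_le hE hB hQ hQ4.ge hp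
      rw [card_powerset, hQ4, sum_linkCharge]
      omega

lemma sum_linkCharge_le_four {a : V} (ha : a ∉ Q) : ∑ p ∈ Q, linkCharge E p a ≤ 4 := by
  by_cases hact : ∃ r ∈ Q, (linkNbr E r a).Nonempty
  · obtain ⟨r, hr, hra⟩ := hact
    rw [sum_eq_single_of_mem r hr fun q hq hqr => ?_]
    · unfold linkCharge
      split_ifs <;> omega
    · have hqa := pair_notMem_of_linkNbr_nonempty hE hB hQ hQ4.ge hr hq (Ne.symm hqr) ha hra
      have hqa' : ¬ (linkNbr E q a).Nonempty := fun ⟨_, hb⟩ => hqa (hE.pair_mem_of_mem_linkNbr hb)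
      simp [linkCharge, hqa, hqa']
  · calc _ ≤ ∑ p ∈ Q, 1 := sum_le_sum fun p hp => by
          rw [linkCharge, if_neg fun h => hact ⟨p, hp, h⟩]
          split_ifs <;> omega
      _ = 4 := by simp [hQ4]

lemma sum_dDeg_le : ∑ p ∈ Q, dDeg E p ≤ 4 * Fintype.card V + 48 := by
  calc ∑ p ∈ Q, dDeg E p ≤ ∑ p ∈ Q, (16 + ∑ a ∈ Qᶜ, linkCharge E p a) :=
        sum_le_sum fun p hp => dDeg_le_of_mem hE hB hQ hQ4 hp
    _ = 64 + ∑ a ∈ Qᶜ, ∑ p ∈ Q, linkCharge E p a := by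
        rw [sum_add_distrib, sum_const, hQ4, sum_comm, smul_eq_mul]
    _ ≤ 64 + ∑ a ∈ Qᶜ, 4 := by
        gcongr with a ha
        exact sum_linkCharge_le_four hE hB hQ hQ4 (mem_compl.1 ha)
    _ = 4 * Fintype.card V + 48 := by
        rw [sum_const, smul_eq_mul, ← card_compl_add_card Q, hQ4]
        ring

end Degree

theorem statement12 : ∃ n0 : ℕ, ∀ n : ℕ, n0 ≤ n → ∀ E : Finset (Finset (Fin n)),
    IsComplex E → ¬ HasCopy B E →
    (∀ u : Fin n, (dDeg E u : ℝ) > 9 / 8 * ((n : ℝ) - 1) + 5 / 16) →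
    (¬ ∃ e ∈ E, e.card = 4) ∧ ∀ e ∈ E, e.card ≤ 3 := by
  refine ⟨103, fun n hn E hE hB hd => ?_⟩
  have hno4 : ¬ ∃ e ∈ E, e.card = 4 := by
    rintro ⟨Q, hQ, hQ4⟩
    have hupper : (∑ p ∈ Q, dDeg E p : ℝ) ≤ 4 * n + 48 := by
      exact_mod_cast (Fintype.card_fin n ▸ sum_dDeg_le hE hB hQ hQ4)
    have hlower : ∑ _p ∈ Q, (9 / 8 * ((n : ℝ) - 1) + 5 / 16) < ∑ p ∈ Q, (dDeg E p : ℝ) :=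
      sum_lt_sum_of_nonempty (card_pos.1 (by omega)) fun p _ => hd p
    rw [sum_const, hQ4, nsmul_eq_mul] at hlower
    have : (103 : ℝ) ≤ n := by exact_mod_cast hn
    linarith
  exact ⟨hno4, fun e he => Nat.le_of_lt_succ (hE.card_lt_of_not_exists_card_eq hno4 he)⟩
end

section
/- Let H be a B-free simplicial complex on n vertices and let v, w, x be vertices of H such that {w,x} is an isolated 2-edge of the link L_v. Then d^(2)(w) ≤ n − 1 − ρ(v). If moreover every edge of H has size at most 3 and every vertex u of H satisfies d(u) > (9/8)(n−1) + 5/16, then ρ(w) ≥ d^(3)(w) − 2 > (n−1)/8 − 27/16 + ρ(v). -/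
open Finset

/-- `e` is an isolated 2-edge of the link of `v`: a 2-edge meeting no other 2-edge -/
def IsIsolated2Edge {V : Type*} [DecidableEq V] (E : Finset (Finset V)) (v : V)
    (e : Finset V) : Prop :=
  e ∈ linkEdges E v ∧ e.card = 2 ∧
    ∀ e' ∈ linkEdges E v, e'.card = 2 → e' ≠ e → Disjoint e' e

/-- `e^(2)(L_v)`: number of 2-edges of the link of `v` -/
def e2 {V : Type*} [DecidableEq V] (E : Finset (Finset V)) (v : V) : ℕ :=
  ((linkEdges E v).filter (fun e => e.card = 2)).card

/-- `φ(v)`: number of isolated 2-edges of the link of `v` -/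
def phi {V : Type*} [DecidableEq V] (E : Finset (Finset V)) (v : V) : ℕ :=
  ((linkEdges E v).filter (fun e => e.card = 2 ∧
    ∀ e' ∈ linkEdges E v, e'.card = 2 → e' ≠ e → Disjoint e' e)).card

/-- the parameter `ρ(v) = e^(2)(L_v) + φ(v) − 2` -/
def rho {V : Type*} [DecidableEq V] (E : Finset (Finset V)) (v : V) : ℤ :=
  (e2 E v : ℤ) + (phi E v : ℤ) - 2

namespace SC13
variable {n : ℕ} {E : Finset (Finset (Fin n))}

lemma mem_linkEdges {v : Fin n} {e : Finset (Fin n)} :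
    e ∈ linkEdges E v ↔ v ∉ e ∧ insert v e ∈ E := by
  unfold linkEdges
  simp only [Finset.mem_image, Finset.mem_filter]
  constructor
  · rintro ⟨f, ⟨hfE, hvf⟩, rfl⟩
    exact ⟨Finset.notMem_erase v f, by rwa [Finset.insert_erase hvf]⟩
  · rintro ⟨hv, hE⟩
    exact ⟨insert v e, ⟨hE, Finset.mem_insert_self v e⟩, by rw [Finset.erase_insert hv]⟩

lemma pair_card {a b : Fin n} (h : a ≠ b) : ({a, b} : Finset (Fin n)).card = 2 := by
  rw [Finset.card_insert_of_notMem (by simp [h]), Finset.card_singleton]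

lemma copyB (hcplx : IsComplex E) {a0 a1 a2 a3 a4 : Fin n}
    (h01 : a0 ≠ a1) (h02 : a0 ≠ a2) (h03 : a0 ≠ a3) (h04 : a0 ≠ a4)
    (h12 : a1 ≠ a2) (h13 : a1 ≠ a3) (h14 : a1 ≠ a4)
    (h23 : a2 ≠ a3) (h24 : a2 ≠ a4) (h34 : a3 ≠ a4)
    (he1 : ({a2, a3} : Finset (Fin n)) ∈ E)
    (he2 : ({a0, a1, a2} : Finset (Fin n)) ∈ E)
    (he3 : ({a0, a3, a4} : Finset (Fin n)) ∈ E) :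
    HasCopy B E := by
  refine ⟨![a0, a1, a2, a3, a4], ?_, ?_⟩
  · intro i j hij
    fin_cases i <;> fin_cases j <;> simp_all
  · intro e he
    have hmem : ∃ s ∈ ({({2, 3} : Finset (Fin 5)), {0, 1, 2}, {0, 3, 4}} :
        Finset (Finset (Fin 5))), e ⊆ s := by
      simpa [B, dClosure] using he
    obtain ⟨s, hs, hes⟩ := hmem
    have himg : e.image ![a0, a1, a2, a3, a4] ⊆ s.image ![a0, a1, a2, a3, a4] :=
      Finset.image_subset_image hes
    refine hcplx _ ?_ _ himg
    simp only [Finset.mem_insert, Finset.mem_singleton] at hs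
    rcases hs with rfl | rfl | rfl <;>
      simpa [Finset.image_insert, Finset.image_singleton] using ‹_›

lemma min'_pair (p q : Fin n) (h : ({p, q} : Finset (Fin n)).Nonempty) :
    ({p, q} : Finset (Fin n)).min' h = min p q := by
  apply le_antisymm
  · refine Finset.min'_le _ _ ?_
    rcases min_choice p q with h' | h' <;> rw [h'] <;> simp
  · apply Finset.le_min'
    intro y hy
    rcases Finset.mem_insert.mp hy with rfl | hy
    · exact min_le_left _ _
    · rw [Finset.mem_singleton.mp hy]; exact min_le_right _ _

lemma max'_pair (p q : Fin n) (h : ({p, q} : Finset (Fin n)).Nonempty) :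
    ({p, q} : Finset (Fin n)).max' h = max p q := by
  apply le_antisymm
  · apply Finset.max'_le
    intro y hy
    rcases Finset.mem_insert.mp hy with rfl | hy
    · exact le_max_left _ _
    · rw [Finset.mem_singleton.mp hy]; exact le_max_right _ _
  · refine Finset.le_max' _ _ ?_
    rcases max_choice p q with h' | h' <;> rw [h'] <;> simp

lemma pair_rep {e : Finset (Fin n)} {z : Fin n} (hc : e.card = 2) (hz : z ∈ e) :
    ∃ y, y ≠ z ∧ e = {z, y} := by
  have h1 : (e.erase z).card = 1 := by rw [Finset.card_erase_of_mem hz, hc]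
  obtain ⟨y, hy⟩ := Finset.card_eq_one.mp h1
  have hyz : y ≠ z := by
    have : y ∈ e.erase z := by rw [hy]; exact Finset.mem_singleton_self y
    exact (Finset.mem_erase.mp this).1
  refine ⟨y, hyz, ?_⟩
  rw [← Finset.insert_erase hz, hy]

/-- In a `P4`-free graph (given as a finset of 2-element finsets), the number of
edges is at most the number of covered vertices. -/
lemma graph_count (T : Finset (Finset (Fin n)))
    (hcard : ∀ e ∈ T, e.card = 2)
    (hP4 : ∀ p q r s : Fin n, p ≠ q → p ≠ r → p ≠ s → q ≠ r → q ≠ s → r ≠ s →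
      ({p, q} : Finset (Fin n)) ∈ T → ({q, r} : Finset (Fin n)) ∈ T →
      ({r, s} : Finset (Fin n)) ∈ T → False) :
    T.card ≤ (T.biUnion id).card := by
  classical
  rcases T.eq_empty_or_nonempty with rfl | ⟨e0, he0⟩
  · simp
  have hne0 : e0.Nonempty := Finset.card_pos.mp (by rw [hcard e0 he0]; norm_num)
  obtain ⟨v0, _⟩ := hne0
  set deg : Fin n → ℕ := fun z => (T.filter (fun e => z ∈ e)).card with hdeg
  set f : Finset (Fin n) → Fin n := fun e =>
    if h : e.Nonempty then
      (if deg (e.min' h) = 1 then e.min' h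
       else if deg (e.max' h) = 1 then e.max' h
       else if ∃ y, e.min' h < y ∧ y < e.max' h ∧
              ({e.min' h, y} : Finset (Fin n)) ∈ T ∧
              ({e.max' h, y} : Finset (Fin n)) ∈ T
            then e.min' h else e.max' h)
    else v0 with hf
  have hfmem : ∀ e ∈ T, ∀ (h : e.Nonempty), f e ∈ e := by
    intro e he h
    simp only [hf, dif_pos h]
    split_ifs <;> first | exact Finset.min'_mem e h | exact Finset.max'_mem e h
  have hEne : ∀ e ∈ T, e.Nonempty := fun e he =>
    Finset.card_pos.mp (by rw [hcard e he]; norm_num)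
  apply Finset.card_le_card_of_injOn f
  · intro e he
    exact Finset.mem_biUnion.mpr ⟨e, he, hfmem e he (hEne e he)⟩
  -- injectivity
  intro e1 h1' e2 h2' heq
  simp only [Finset.mem_coe] at h1' h2'
  by_contra hne
  have hne1 := hEne e1 h1'
  have hne2 := hEne e2 h2'
  have hz1 : f e1 ∈ e1 := hfmem e1 h1' hne1
  have hz2 : f e1 ∈ e2 := heq ▸ hfmem e2 h2' hne2
  -- the collision vertex has degree ≥ 2
  have hdegz : ¬ deg (f e1) = 1 := by
    have h2le : 2 ≤ deg (f e1) := by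
      apply Finset.one_lt_card.mpr
      exact ⟨e1, Finset.mem_filter.mpr ⟨h1', hz1⟩, e2, Finset.mem_filter.mpr ⟨h2', hz2⟩, hne⟩
    omega
  have hbranch : ∀ e (he : e ∈ T) (hn : e.Nonempty), ¬ deg (f e) = 1 →
      ¬ deg (e.min' hn) = 1 ∧ ¬ deg (e.max' hn) = 1 ∧
      ((∃ y, e.min' hn < y ∧ y < e.max' hn ∧
          ({e.min' hn, y} : Finset (Fin n)) ∈ T ∧
          ({e.max' hn, y} : Finset (Fin n)) ∈ T) → f e = e.min' hn) ∧
      ((¬ ∃ y, e.min' hn < y ∧ y < e.max' hn ∧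
          ({e.min' hn, y} : Finset (Fin n)) ∈ T ∧
          ({e.max' hn, y} : Finset (Fin n)) ∈ T) → f e = e.max' hn) := by
    intro e he hn hd
    have hfe : f e =
      (if deg (e.min' hn) = 1 then e.min' hn
       else if deg (e.max' hn) = 1 then e.max' hn
       else if ∃ y, e.min' hn < y ∧ y < e.max' hn ∧
              ({e.min' hn, y} : Finset (Fin n)) ∈ T ∧
              ({e.max' hn, y} : Finset (Fin n)) ∈ T
            then e.min' hn else e.max' hn) := by
      simp only [hf, dif_pos hn]
    by_cases hA : deg (e.min' hn) = 1
    · exfalso; apply hd; rw [hfe, if_pos hA]; exact hA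
    by_cases hB : deg (e.max' hn) = 1
    · exfalso; apply hd; rw [hfe, if_neg hA, if_pos hB]; exact hB
    rw [if_neg hA, if_neg hB] at hfe
    refine ⟨hA, hB, ?_, ?_⟩
    · intro hC; rw [hfe, if_pos hC]
    · intro hC; rw [hfe, if_neg hC]
  have hdegz2 : ¬ deg (f e2) = 1 := by rw [← heq]; exact hdegz
  obtain ⟨hA1, hB1, hC1, hD1⟩ := hbranch e1 h1' hne1 hdegz
  obtain ⟨hA2, hB2, hC2, hD2⟩ := hbranch e2 h2' hne2 hdegz2
  -- representations
  obtain ⟨a, haz, he1r⟩ := pair_rep (hcard e1 h1') hz1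
  obtain ⟨c, hcz, he2r⟩ := pair_rep (hcard e2 h2') hz2
  set z := f e1 with hzdef
  have hac : a ≠ c := by
    intro h; apply hne; rw [he1r, he2r, h]
  -- min'/max' of e1 and e2
  have hlt1 : e1.min' hne1 < e1.max' hne1 :=
    Finset.min'_lt_max'_of_card e1 (by rw [hcard e1 h1']; norm_num)
  have hlt2 : e2.min' hne2 < e2.max' hne2 :=
    Finset.min'_lt_max'_of_card e2 (by rw [hcard e2 h2']; norm_num)
  have hmm1 : (e1.min' hne1 = z ∧ e1.max' hne1 = a) ∨
      (e1.min' hne1 = a ∧ e1.max' hne1 = z) := by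
    have h1m : e1.min' hne1 ∈ ({z, a} : Finset (Fin n)) := by
      rw [← he1r]; exact Finset.min'_mem e1 hne1
    have h1M : e1.max' hne1 ∈ ({z, a} : Finset (Fin n)) := by
      rw [← he1r]; exact Finset.max'_mem e1 hne1
    simp only [Finset.mem_insert, Finset.mem_singleton] at h1m h1M
    rcases h1m with hm | hm <;> rcases h1M with hM | hM
    · exact absurd (hm.trans hM.symm) (ne_of_lt hlt1)
    · exact Or.inl ⟨hm, hM⟩
    · exact Or.inr ⟨hm, hM⟩
    · exact absurd (hm.trans hM.symm) (ne_of_lt hlt1)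
  have hmm2 : (e2.min' hne2 = z ∧ e2.max' hne2 = c) ∨
      (e2.min' hne2 = c ∧ e2.max' hne2 = z) := by
    have h1m : e2.min' hne2 ∈ ({z, c} : Finset (Fin n)) := by
      rw [← he2r]; exact Finset.min'_mem e2 hne2
    have h1M : e2.max' hne2 ∈ ({z, c} : Finset (Fin n)) := by
      rw [← he2r]; exact Finset.max'_mem e2 hne2
    simp only [Finset.mem_insert, Finset.mem_singleton] at h1m h1M
    rcases h1m with hm | hm <;> rcases h1M with hM | hM
    · exact absurd (hm.trans hM.symm) (ne_of_lt hlt2)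
    · exact Or.inl ⟨hm, hM⟩
    · exact Or.inr ⟨hm, hM⟩
    · exact absurd (hm.trans hM.symm) (ne_of_lt hlt2)
  -- T-edges as pairs
  have he1T : ({z, a} : Finset (Fin n)) ∈ T := he1r ▸ h1'
  have he2T : ({z, c} : Finset (Fin n)) ∈ T := he2r ▸ h2'
  -- find the triangle edge {a,c}
  have hdega : ¬ deg a = 1 := by
    rcases hmm1 with ⟨hm, hM⟩ | ⟨hm, hM⟩
    · exact hM ▸ hB1
    · exact hm ▸ hA1
  have hdegc : ¬ deg c = 1 := by
    rcases hmm2 with ⟨hm, hM⟩ | ⟨hm, hM⟩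
    · exact hM ▸ hB2
    · exact hm ▸ hA2
  have hpos : 1 ≤ deg a := by
    apply Finset.card_pos.mpr
    exact ⟨e1, Finset.mem_filter.mpr ⟨h1', by rw [he1r]; simp⟩⟩
  have h2a : 2 ≤ deg a := by omega
  obtain ⟨g1, hg1, g2, hg2, hgne⟩ := Finset.one_lt_card.mp h2a
  have hget : ∃ e3 ∈ T, a ∈ e3 ∧ e3 ≠ e1 := by
    by_cases hq : g1 = e1
    · exact ⟨g2, (Finset.mem_filter.mp hg2).1, (Finset.mem_filter.mp hg2).2,
        fun h => hgne (hq.trans h.symm)⟩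
    · exact ⟨g1, (Finset.mem_filter.mp hg1).1, (Finset.mem_filter.mp hg1).2, hq⟩
  obtain ⟨e3, he3T, hae3, he3ne⟩ := hget
  obtain ⟨y, hya, he3r⟩ := pair_rep (hcard e3 he3T) hae3
  have hyz : y ≠ z := by
    intro h
    apply he3ne
    rw [he3r, h, he1r, Finset.pair_comm]
  have htri : ({a, c} : Finset (Fin n)) ∈ T := by
    by_cases hyc : y = c
    · rw [← hyc]; rw [he3r] at he3T; exact he3T
    · exfalso
      refine hP4 y a z c hya hyz hyc haz hac (Ne.symm hcz) ?_ ?_ he2T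
      · rw [Finset.pair_comm]; rw [he3r] at he3T; exact he3T
      · rw [Finset.pair_comm]; exact he1T
  have he1T' : ({a, z} : Finset (Fin n)) ∈ T := by
    rw [Finset.pair_comm]; exact he1T
  have he2T' : ({c, z} : Finset (Fin n)) ∈ T := by
    rw [Finset.pair_comm]; exact he2T
  have htri' : ({c, a} : Finset (Fin n)) ∈ T := by
    rw [Finset.pair_comm]; exact htri
  have hself : ∀ p u : Fin n, ({p, u} : Finset (Fin n)) ∈ T → u ≠ p := by
    intro p u h hcontra
    have := hcard _ h
    rw [hcontra] at this
    simp at this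
  have hNz : ∀ u : Fin n, ({z, u} : Finset (Fin n)) ∈ T → u = a ∨ u = c := by
    intro u h
    by_contra hcon
    push_neg at hcon
    exact hP4 u z a c (hself z u h) hcon.1 hcon.2 (Ne.symm haz) (Ne.symm hcz) hac
      (Finset.pair_comm z u ▸ h) he1T htri
  have hNa : ∀ u : Fin n, ({a, u} : Finset (Fin n)) ∈ T → u = z ∨ u = c := by
    intro u h
    by_contra hcon
    push_neg at hcon
    exact hP4 u a z c (hself a u h) hcon.1 hcon.2 haz hac (Ne.symm hcz)
      (Finset.pair_comm a u ▸ h) he1T' he2T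
  have hNc : ∀ u : Fin n, ({c, u} : Finset (Fin n)) ∈ T → u = z ∨ u = a := by
    intro u h
    by_contra hcon
    push_neg at hcon
    exact hP4 u c z a (hself c u h) hcon.1 hcon.2 hcz (Ne.symm hac) (Ne.symm haz)
      (Finset.pair_comm c u ▸ h) he2T' he1T
  -- characterization of the third condition for e1
  have hiff1 : (∃ y, e1.min' hne1 < y ∧ y < e1.max' hne1 ∧
      ({e1.min' hne1, y} : Finset (Fin n)) ∈ T ∧
      ({e1.max' hne1, y} : Finset (Fin n)) ∈ T) ↔
      (e1.min' hne1 < c ∧ c < e1.max' hne1) := by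
    constructor
    · rintro ⟨u, hu1, hu2, hT1, hT2⟩
      rcases hmm1 with ⟨hm, hM⟩ | ⟨hm, hM⟩
      · rw [hm] at hT1
        rcases hNz u hT1 with h' | h'
        · rw [h', hM] at hu2; exact absurd hu2 (lt_irrefl a)
        · rw [h'] at hu1 hu2; exact ⟨hu1, hu2⟩
      · rw [hm] at hT1
        rcases hNa u hT1 with h' | h'
        · rw [h', hM] at hu2; exact absurd hu2 (lt_irrefl z)
        · rw [h'] at hu1 hu2; exact ⟨hu1, hu2⟩
    · rintro ⟨hl, hr⟩
      refine ⟨c, hl, hr, ?_, ?_⟩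
      · rcases hmm1 with ⟨hm, _⟩ | ⟨hm, _⟩
        · rw [hm]; exact he2T
        · rw [hm]; exact htri
      · rcases hmm1 with ⟨_, hM⟩ | ⟨_, hM⟩
        · rw [hM]; exact htri
        · rw [hM]; exact he2T
  have hiff2 : (∃ y, e2.min' hne2 < y ∧ y < e2.max' hne2 ∧
      ({e2.min' hne2, y} : Finset (Fin n)) ∈ T ∧
      ({e2.max' hne2, y} : Finset (Fin n)) ∈ T) ↔
      (e2.min' hne2 < a ∧ a < e2.max' hne2) := by
    constructor
    · rintro ⟨u, hu1, hu2, hT1, hT2⟩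
      rcases hmm2 with ⟨hm, hM⟩ | ⟨hm, hM⟩
      · rw [hm] at hT1
        rcases hNz u hT1 with h' | h'
        · rw [h'] at hu1 hu2; exact ⟨hu1, hu2⟩
        · rw [h', hM] at hu2; exact absurd hu2 (lt_irrefl c)
      · rw [hm] at hT1
        rcases hNc u hT1 with h' | h'
        · rw [h', hM] at hu2; exact absurd hu2 (lt_irrefl z)
        · rw [h'] at hu1 hu2; exact ⟨hu1, hu2⟩
    · rintro ⟨hl, hr⟩
      refine ⟨a, hl, hr, ?_, ?_⟩
      · rcases hmm2 with ⟨hm, _⟩ | ⟨hm, _⟩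
        · rw [hm]; exact he1T
        · rw [hm]; exact htri'
      · rcases hmm2 with ⟨_, hM⟩ | ⟨_, hM⟩
        · rw [hM]; exact htri'
        · rw [hM]; exact he1T
  -- final case analysis
  by_cases hc1 : (∃ y, e1.min' hne1 < y ∧ y < e1.max' hne1 ∧
      ({e1.min' hne1, y} : Finset (Fin n)) ∈ T ∧
      ({e1.max' hne1, y} : Finset (Fin n)) ∈ T)
  · have hm1 : e1.min' hne1 = z := (hC1 hc1).symm
    have hM1 : e1.max' hne1 = a := by
      rcases hmm1 with ⟨_, hM⟩ | ⟨hm, _⟩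
      · exact hM
      · exact absurd (hm.symm.trans hm1) haz
    obtain ⟨hzc, hca⟩ := hiff1.mp hc1
    rw [hm1] at hzc
    rw [hM1] at hca
    by_cases hc2 : (∃ y, e2.min' hne2 < y ∧ y < e2.max' hne2 ∧
        ({e2.min' hne2, y} : Finset (Fin n)) ∈ T ∧
        ({e2.max' hne2, y} : Finset (Fin n)) ∈ T)
    · have hm2 : e2.min' hne2 = z := (hC2 hc2).symm.trans heq.symm
      have hM2 : e2.max' hne2 = c := by
        rcases hmm2 with ⟨_, hM⟩ | ⟨hm, _⟩
        · exact hM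
        · exact absurd (hm.symm.trans hm2) hcz
      obtain ⟨hza, hac'⟩ := hiff2.mp hc2
      rw [hM2] at hac'
      exact lt_asymm hca hac'
    · have hM2 : e2.max' hne2 = z := (hD2 hc2).symm.trans heq.symm
      have hm2 : e2.min' hne2 = c := by
        rcases hmm2 with ⟨hm, hM⟩ | ⟨hm, _⟩
        · exact absurd (hM.symm.trans hM2) hcz
        · exact hm
      have hcltz : c < z := by rw [← hm2, ← hM2]; exact hlt2
      exact lt_asymm hzc hcltz
  · have hM1 : e1.max' hne1 = z := (hD1 hc1).symm
    have hm1 : e1.min' hne1 = a := by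
      rcases hmm1 with ⟨hm, hM⟩ | ⟨hm, _⟩
      · exact absurd (hM.symm.trans hM1) haz
      · exact hm
    have haltz : a < z := by rw [← hm1, ← hM1]; exact hlt1
    have hnbet1 : ¬ (a < c ∧ c < z) := by
      rintro ⟨h1, h2⟩
      exact hc1 (hiff1.mpr ⟨by rw [hm1]; exact h1, by rw [hM1]; exact h2⟩)
    by_cases hc2 : (∃ y, e2.min' hne2 < y ∧ y < e2.max' hne2 ∧
        ({e2.min' hne2, y} : Finset (Fin n)) ∈ T ∧
        ({e2.max' hne2, y} : Finset (Fin n)) ∈ T)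
    · have hm2 : e2.min' hne2 = z := (hC2 hc2).symm.trans heq.symm
      obtain ⟨hza, _⟩ := hiff2.mp hc2
      rw [hm2] at hza
      exact lt_asymm haltz hza
    · have hM2 : e2.max' hne2 = z := (hD2 hc2).symm.trans heq.symm
      have hm2 : e2.min' hne2 = c := by
        rcases hmm2 with ⟨hm, hM⟩ | ⟨hm, _⟩
        · exact absurd (hM.symm.trans hM2) hcz
        · exact hm
      have hnbet2 : ¬ (c < a ∧ a < z) := by
        rintro ⟨h1, h2⟩
        exact hc2 (hiff2.mpr ⟨by rw [hm2]; exact h1, by rw [hM2]; exact h2⟩)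
      rcases lt_trichotomy a c with h | h | h
      · have hcltz : c < z := by rw [← hm2, ← hM2]; exact hlt2
        exact hnbet1 ⟨h, hcltz⟩
      · exact hac h
      · exact hnbet2 ⟨h, haltz⟩

variable {E : Finset (Finset (Fin n))}

lemma noConfig (hcplx : IsComplex E) (hfree : ¬ HasCopy B E) {v a b c d : Fin n}
    (hab : ({a, b} : Finset (Fin n)) ∈ linkEdges E v)
    (hcd : ({c, d} : Finset (Fin n)) ∈ linkEdges E v)
    (hbc : ({b, c} : Finset (Fin n)) ∈ E)
    (hab' : a ≠ b) (hcd' : c ≠ d) (hac : a ≠ c) (had : a ≠ d)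
    (hbc' : b ≠ c) (hbd : b ≠ d) : False := by
  obtain ⟨hva, h1⟩ := mem_linkEdges.mp hab
  obtain ⟨hvc, h2⟩ := mem_linkEdges.mp hcd
  simp only [Finset.mem_insert, Finset.mem_singleton, not_or] at hva hvc
  exact hfree (copyB hcplx hva.1 hva.2 hvc.1 hvc.2 hab' hac had hbc' hbd hcd' hbc h1 h2)

lemma linkEdges_subset_of_complex (hcplx : IsComplex E) {v : Fin n} {e : Finset (Fin n)}
    (he : e ∈ linkEdges E v) : e ∈ E := by
  obtain ⟨-, h⟩ := mem_linkEdges.mp he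
  exact hcplx _ h _ (Finset.subset_insert v e)

lemma cover_ge (hcplx : IsComplex E) (hfree : ¬ HasCopy B E) (v : Fin n) :
    e2 E v + phi E v ≤
      (((linkEdges E v).filter (fun e => e.card = 2)).biUnion id).card := by
  classical
  set L := linkEdges E v with hL
  set T := L.filter (fun e => e.card = 2) with hT
  set Pr : Finset (Fin n) → Prop :=
    fun e => ∀ e' ∈ L, e'.card = 2 → e' ≠ e → Disjoint e' e with hPr
  set I := T.filter Pr with hI
  set U := T.filter (fun e => ¬ Pr e) with hU
  have hTcard : ∀ e ∈ T, e.card = 2 := by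
    intro e he; exact (Finset.mem_filter.mp he).2
  have hTL : ∀ e ∈ T, e ∈ L := fun e he => (Finset.mem_filter.mp he).1
  have he2T : e2 E v = T.card := by
    unfold e2
    congr 1
  have hphiI : phi E v = I.card := by
    unfold phi
    congr 1
    ext e
    simp only [hI, hT, Finset.mem_filter, and_assoc, hPr]
    exact Iff.rfl
  have hIUunion : T = I ∪ U := by
    ext e
    simp only [hI, hU, Finset.mem_union, Finset.mem_filter]
    tauto
  have hdisjIU : Disjoint I U := by
    rw [Finset.disjoint_left]
    intro e he he'
    exact (Finset.mem_filter.mp he').2 (Finset.mem_filter.mp he).2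
  have hTIU : T.card = I.card + U.card := by
    rw [hIUunion, Finset.card_union_of_disjoint hdisjIU]
  have hbiU : T.biUnion id = I.biUnion id ∪ U.biUnion id := by
    rw [hIUunion]
    ext p
    simp only [Finset.mem_biUnion, Finset.mem_union, id]
    constructor
    · rintro ⟨e, he | he, hpe⟩
      · exact Or.inl ⟨e, he, hpe⟩
      · exact Or.inr ⟨e, he, hpe⟩
    · rintro (⟨e, he, hpe⟩ | ⟨e, he, hpe⟩)
      · exact ⟨e, Or.inl he, hpe⟩
      · exact ⟨e, Or.inr he, hpe⟩
  have hdisjB : Disjoint (I.biUnion id) (U.biUnion id) := by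
    rw [Finset.disjoint_left]
    intro p hp hp'
    obtain ⟨e, heI, hpe⟩ := Finset.mem_biUnion.mp hp
    obtain ⟨e', he'U, hpe'⟩ := Finset.mem_biUnion.mp hp'
    obtain ⟨heT, hPe⟩ := Finset.mem_filter.mp heI
    obtain ⟨he'T, hnPe'⟩ := Finset.mem_filter.mp he'U
    have hne : e' ≠ e := by
      intro h; exact hnPe' (h ▸ hPe)
    have := hPe e' (hTL e' he'T) (hTcard e' he'T) hne
    exact Finset.disjoint_left.mp this hpe' hpe
  have hIcard : (I.biUnion id).card = 2 * I.card := by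
    have hpd : ∀ e ∈ I, ∀ e' ∈ I, e ≠ e' → Disjoint (id e) (id e') := by
      intro e he e' he' hne
      obtain ⟨heT, hPe⟩ := Finset.mem_filter.mp he
      obtain ⟨he'T, hPe'⟩ := Finset.mem_filter.mp he'
      exact hPe' e (hTL e heT) (hTcard e heT) hne
    rw [Finset.card_biUnion hpd]
    have hcongr : ∀ e ∈ I, (id e).card = 2 := by
      intro e he
      simpa using hTcard e (Finset.mem_filter.mp he).1
    rw [Finset.sum_congr rfl hcongr, Finset.sum_const, smul_eq_mul, mul_comm]
  have hUcard : U.card ≤ (U.biUnion id).card := by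
    apply graph_count
    · intro e he; exact hTcard e (Finset.mem_filter.mp he).1
    · intro p q r s hpq hpr hps hqr hqs hrs h1 h2 h3
      have h1' := hTL _ (Finset.mem_filter.mp h1).1
      have h3' := hTL _ (Finset.mem_filter.mp h3).1
      have h2' : ({q, r} : Finset (Fin n)) ∈ E :=
        linkEdges_subset_of_complex hcplx (hTL _ (Finset.mem_filter.mp h2).1)
      exact noConfig hcplx hfree h1' h3' h2' hpq hrs hpr hps hqr hqs
  have htotal : (T.biUnion id).card = (I.biUnion id).card + (U.biUnion id).card := by
    rw [hbiU, Finset.card_union_of_disjoint hdisjB]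
  omega

end SC13

theorem statement13 (n : ℕ) (E : Finset (Finset (Fin n)))
    (hcplx : IsComplex E) (hfree : ¬ HasCopy B E)
    (v w x : Fin n) (hwx : w ≠ x) (hiso : IsIsolated2Edge E v {w, x}) :
    (degI E 2 w : ℤ) ≤ (n : ℤ) - 1 - rho E v ∧
    ((∀ e ∈ E, e.card ≤ 3) →
      (∀ u : Fin n, (dDeg E u : ℝ) > 9 / 8 * ((n : ℝ) - 1) + 5 / 16) →
      (degI E 3 w : ℤ) - 2 ≤ rho E w ∧
      (degI E 3 w : ℝ) - 2 > ((n : ℝ) - 1) / 8 - 27 / 16 + (rho E v : ℝ)) := by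

  classical
  obtain ⟨hwxL, hwxc, hwxiso⟩ := hiso
  set T := (linkEdges E v).filter (fun e => e.card = 2) with hTdef
  set S := (T.biUnion id) \ {w, x} with hSdef
  have hTcard : ∀ e ∈ T, e.card = 2 := fun e he => (Finset.mem_filter.mp he).2
  have hTL : ∀ e ∈ T, e ∈ linkEdges E v := fun e he => (Finset.mem_filter.mp he).1
  have hwnS : w ∉ S := by simp [hSdef]
  have hclaim : ∀ s ∈ S, ({w, s} : Finset (Fin n)) ∉ E := by
    intro s hs hws
    obtain ⟨hsb, hsnwx⟩ := Finset.mem_sdiff.mp hs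
    obtain ⟨e', he'T, hse'⟩ := Finset.mem_biUnion.mp hsb
    have hse'' : s ∈ e' := hse'
    have he'ne : e' ≠ ({w, x} : Finset (Fin n)) := by
      intro h; rw [h] at hse''; exact hsnwx hse''
    have hdisj : Disjoint e' {w, x} := hwxiso e' (hTL e' he'T) (hTcard e' he'T) he'ne
    obtain ⟨p, hps, he'r⟩ := SC13.pair_rep (hTcard e' he'T) hse''
    have hwe' : w ∉ e' := fun h => (Finset.disjoint_left.mp hdisj h) (by simp)
    have hxe' : x ∉ e' := fun h => (Finset.disjoint_left.mp hdisj h) (by simp)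
    have hsx : s ≠ x := fun h => hsnwx (by simp [h])
    have hsw : s ≠ w := fun h => hsnwx (by simp [h])
    have hpe' : p ∈ e' := by rw [he'r]; simp
    have hpx : p ≠ x := fun h => hxe' (h ▸ hpe')
    have hpw : p ≠ w := fun h => hwe' (h ▸ hpe')
    refine SC13.noConfig hcplx hfree (v := v) (a := x) (b := w) (c := s) (d := p)
      ?_ ?_ hws hwx.symm (Ne.symm hps) (Ne.symm hsx) (Ne.symm hpx)
      (Ne.symm hsw) (Ne.symm hpw)
    · rw [Finset.pair_comm]; exact hwxL
    · exact he'r ▸ hTL e' he'T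
  set g : Finset (Fin n) → Fin n := fun e =>
    if h : (e.erase w).Nonempty then (e.erase w).min' h else w with hg
  have hgval : ∀ y : Fin n, y ≠ w → g ({w, y} : Finset (Fin n)) = y := by
    intro y hyw
    have her : ({w, y} : Finset (Fin n)).erase w = {y} :=
      Finset.erase_insert (by simp [Ne.symm hyw])
    simp only [hg, her]
    rw [dif_pos (Finset.singleton_nonempty y)]
    exact Finset.min'_singleton y
  have hd2le : degI E 2 w ≤ (Finset.univ \ insert w S).card := by
    unfold degI
    apply Finset.card_le_card_of_injOn g
    · intro e he
      obtain ⟨heE, hwe, hec⟩ := Finset.mem_filter.mp he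
      obtain ⟨y, hyw, her⟩ := SC13.pair_rep hec hwe
      have hgy : g e = y := by rw [her]; exact hgval y hyw
      rw [hgy, Finset.mem_coe, Finset.mem_sdiff, Finset.mem_insert]
      refine ⟨Finset.mem_univ y, ?_⟩
      push_neg
      exact ⟨hyw, fun hyS => hclaim y hyS (her ▸ heE)⟩
    · intro e1 h1 e2' h2 hg12
      simp only [Finset.mem_coe, Finset.mem_filter] at h1 h2
      obtain ⟨y1, hy1w, her1⟩ := SC13.pair_rep h1.2.2 h1.2.1
      obtain ⟨y2, hy2w, her2⟩ := SC13.pair_rep h2.2.2 h2.2.1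
      rw [her1, hgval y1 hy1w] at hg12
      rw [her2, hgval y2 hy2w] at hg12
      rw [her1, her2, hg12]
  have hcardsd : (Finset.univ \ insert w S).card = n - (S.card + 1) := by
    rw [Finset.card_sdiff_of_subset (Finset.subset_univ _), Finset.card_insert_of_notMem hwnS,
      Finset.card_univ, Fintype.card_fin]
  have hSn : S.card + 1 ≤ n := by
    have := Finset.card_le_univ (insert w S)
    rw [Finset.card_insert_of_notMem hwnS] at this
    simpa using this
  have hcover : e2 E v + phi E v ≤ (T.biUnion id).card := SC13.cover_ge hcplx hfree v
  have hsplitS : (T.biUnion id).card ≤ S.card + 2 := by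
    have h2 : (T.biUnion id).card ≤ S.card + ({w, x} : Finset (Fin n)).card := by
      rw [hSdef]
      exact Finset.card_le_card_sdiff_add_card
    rw [SC13.pair_card hwx] at h2
    exact h2
  have hphi1 : 1 ≤ phi E v := by
    unfold phi
    apply Finset.card_pos.mpr
    refine ⟨{w, x}, ?_⟩
    simp only [Finset.mem_filter]
    exact ⟨hwxL, hwxc, hwxiso⟩
  have he21 : 1 ≤ e2 E v := by
    unfold e2
    apply Finset.card_pos.mpr
    refine ⟨{w, x}, ?_⟩
    simp only [Finset.mem_filter]
    exact ⟨hwxL, hwxc⟩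
  have hpart1 : (degI E 2 w : ℤ) ≤ (n : ℤ) - 1 - rho E v := by
    unfold rho
    omega
  refine ⟨hpart1, ?_⟩
  intro hmax hmin
  have he2w : e2 E w = degI E 3 w := by
    unfold e2 degI
    apply Finset.card_bij (fun e _ => insert w e)
    · intro e he
      obtain ⟨heL, hec⟩ := Finset.mem_filter.mp he
      obtain ⟨hwe, hE⟩ := SC13.mem_linkEdges.mp heL
      exact Finset.mem_filter.mpr ⟨hE, Finset.mem_insert_self w e,
        by rw [Finset.card_insert_of_notMem hwe, hec]⟩
    · intro ea h1 eb h2 hi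
      obtain ⟨hwe1, _⟩ := SC13.mem_linkEdges.mp (Finset.mem_filter.mp h1).1
      obtain ⟨hwe2, _⟩ := SC13.mem_linkEdges.mp (Finset.mem_filter.mp h2).1
      have := congrArg (fun s => s.erase w) hi
      simpa [Finset.erase_insert hwe1, Finset.erase_insert hwe2] using this
    · intro f hf
      obtain ⟨hfE, hwf, hfc⟩ := Finset.mem_filter.mp hf
      refine ⟨f.erase w, ?_, ?_⟩
      · apply Finset.mem_filter.mpr
        refine ⟨SC13.mem_linkEdges.mpr
          ⟨Finset.notMem_erase w f, by rwa [Finset.insert_erase hwf]⟩, ?_⟩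
        rw [Finset.card_erase_of_mem hwf, hfc]
      · rw [Finset.insert_erase hwf]
  have hpart2a : (degI E 3 w : ℤ) - 2 ≤ rho E w := by
    unfold rho
    omega
  have hsplit : dDeg E w = degI E 2 w + degI E 3 w := by
    unfold dDeg degI
    have hd : Disjoint (E.filter (fun e => w ∈ e ∧ e.card = 2))
        (E.filter (fun e => w ∈ e ∧ e.card = 3)) := by
      rw [Finset.disjoint_left]
      intro e he1 he2
      have ha := (Finset.mem_filter.mp he1).2.2
      have hb := (Finset.mem_filter.mp he2).2.2
      omega
    rw [← Finset.card_union_of_disjoint hd]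
    congr 1
    ext e
    simp only [Finset.mem_filter, Finset.mem_union]
    constructor
    · rintro ⟨he, hwe, hc⟩
      have := hmax e he
      rcases (by omega : e.card = 2 ∨ e.card = 3) with h | h
      · exact Or.inl ⟨he, hwe, h⟩
      · exact Or.inr ⟨he, hwe, h⟩
    · rintro (⟨he, hwe, hc⟩ | ⟨he, hwe, hc⟩) <;> exact ⟨he, hwe, by omega⟩
  refine ⟨hpart2a, ?_⟩
  have hminw := hmin w
  have hd2R : (degI E 2 w : ℝ) ≤ (n : ℝ) - 1 - (rho E v : ℝ) := by
    exact_mod_cast hpart1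
  have hdsum : (dDeg E w : ℝ) = (degI E 2 w : ℝ) + (degI E 3 w : ℝ) := by
    exact_mod_cast congrArg (Nat.cast (R := ℝ)) hsplit
  linarith
end

section
/- Let H be a B-free simplicial complex on n vertices and let v, w be vertices of H such that w is a tip of a star in the link L_v. Then d^(2)(v) ≤ n − ρ(w). If moreover every edge of H has size at most 3 and every vertex u of H satisfies d(u) > (9/8)(n−1) + 5/16, then ρ(v) ≥ d^(3)(v) − 2 > (n−1)/8 − 43/16 + ρ(w). -/
open Finset

/-- `w` is a tip of a star in the link `L_v` -/
def TipOfStar {V : Type*} [DecidableEq V] (E : Finset (Finset V)) (v w : V) : Prop :=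
  ∃ x y : V, w ≠ x ∧ x ≠ y ∧ y ≠ w ∧
    ({w, x} : Finset V) ∈ linkEdges E v ∧ ({x, y} : Finset V) ∈ linkEdges E v

/-!
In a `B`-free complex the 2-edges of a link `L_w` contain no path `a b c d` on four vertices,
since `{w,a,b}`, `{w,c,d}`, `{b,c}` would form a copy of `B`. Letting every vertex spread a unit
weight evenly over its 2-edges, each such edge then collects weight at least `1`, and an isolated
one collects `2`; hence `e^(2)(L_w) + φ(w)` is at most the number of vertices covered by `L_w^(2)`.
If `wx` and `xy` are 2-edges of `L_v`, a neighbour of `v` covered by `L_w^(2)` must be `x` or `y`,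
again because `B` would appear otherwise. So the neighbourhood of `v` and the vertex set of
`L_w^(2)` overlap in at most two vertices, which gives `d^(2)(v) + e^(2)(L_w) + φ(w) ≤ n + 2`.
The second part follows from `d(v) = d^(2)(v) + d^(3)(v)` and `d^(3)(v) = e^(2)(L_v)`.
-/

section TwoGraph

variable {α : Type*} [DecidableEq α]

/-- No path `a b c d` on four distinct vertices; adjacent vertices are distinct anyway in a
`2`-uniform family. -/
def P4Free (G : Finset (Finset α)) : Prop :=
  ∀ a b c d : α, a ≠ c → a ≠ d → b ≠ d → {a, b} ∈ G → {b, c} ∈ G → {c, d} ∈ G → False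

def isolatedEdges (G : Finset (Finset α)) : Finset (Finset α) :=
  {g ∈ G | ∀ g' ∈ G, g' ≠ g → Disjoint g' g}

lemma Finset.exists_eq_pair_of_card_eq_two {g : Finset α} (hg : #g = 2) {a : α} (ha : a ∈ g) :
    ∃ c, a ≠ c ∧ g = {a, c} := by
  obtain ⟨p, q, hpq, rfl⟩ := card_eq_two.1 hg
  rcases mem_insert.1 ha with rfl | hq
  · exact ⟨q, hpq, rfl⟩
  · rw [mem_singleton.1 hq]
    exact ⟨p, hpq.symm, pair_comm p q⟩

variable {G : Finset (Finset α)}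

lemma card_filter_mem_le_two (hG : ∀ g ∈ G, #g = 2) (hP : P4Free G) {a b d : α}
    (hab : {a, b} ∈ G) (hbd : {b, d} ∈ G) (had : a ≠ d) : #{g ∈ G | a ∈ g} ≤ 2 := by
  have hsub : {g ∈ G | a ∈ g} ⊆ {{a, b}, {a, d}} := by
    intro g hg
    obtain ⟨hgG, hag⟩ := mem_filter.1 hg
    obtain ⟨c, hac, rfl⟩ := exists_eq_pair_of_card_eq_two (hG g hgG) hag
    by_contra hcbd
    simp only [mem_insert, mem_singleton] at hcbd
    exact hP c a b d (fun h => hcbd (.inl (by rw [h]))) (fun h => hcbd (.inr (by rw [h])))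
      had (by rwa [pair_comm]) hab hbd
  exact (card_le_card hsub).trans card_le_two

lemma card_filter_mem_eq_one_of_mem_isolatedEdges {g : Finset α} (hg : g ∈ isolatedEdges G)
    {a : α} (ha : a ∈ g) : #{g' ∈ G | a ∈ g'} = 1 := by
  obtain ⟨hgG, hiso⟩ := mem_filter.1 hg
  rw [card_eq_one]
  refine ⟨g, eq_singleton_iff_unique_mem.2 ⟨mem_filter.2 ⟨hgG, ha⟩, fun g' hg' => ?_⟩⟩
  obtain ⟨hg'G, hag'⟩ := mem_filter.1 hg'
  by_contra hne
  exact disjoint_left.1 (hiso g' hg'G hne) hag' ha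

lemma one_le_card_filter_mem {g : Finset α} (hg : g ∈ G) {a : α} (ha : a ∈ g) :
    1 ≤ #{g' ∈ G | a ∈ g'} :=
  card_pos.2 ⟨g, mem_filter.2 ⟨hg, ha⟩⟩

lemma exists_ne_pair_mem (hG : ∀ g ∈ G, #g = 2) (a : α) {b : α}
    (hb : 2 ≤ #{g ∈ G | b ∈ g}) : ∃ d, a ≠ d ∧ {b, d} ∈ G := by
  obtain ⟨g, hg, hne⟩ := exists_mem_ne hb {a, b}
  obtain ⟨hgG, hbg⟩ := mem_filter.1 hg
  obtain ⟨d, -, rfl⟩ := exists_eq_pair_of_card_eq_two (hG g hgG) hbg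
  exact ⟨d, fun had => hne (by rw [had, pair_comm]), hgG⟩

lemma one_add_ite_le_sum_inv_card (hG : ∀ g ∈ G, #g = 2) (hP : P4Free G) {g : Finset α}
    (hg : g ∈ G) :
    (1 + if g ∈ isolatedEdges G then 1 else 0 : ℚ) ≤ ∑ u ∈ g, (#{g' ∈ G | u ∈ g'} : ℚ)⁻¹ := by
  obtain ⟨a, b, hab, rfl⟩ := card_eq_two.1 (hG g hg)
  rw [sum_pair hab]
  split_ifs with hiso
  · rw [card_filter_mem_eq_one_of_mem_isolatedEdges hiso (mem_insert_self a {b}),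
      card_filter_mem_eq_one_of_mem_isolatedEdges hiso (mem_insert_of_mem (mem_singleton_self b))]
    norm_num
  have ha := one_le_card_filter_mem hg (mem_insert_self a {b})
  have hb := one_le_card_filter_mem hg (mem_insert_of_mem (mem_singleton_self b))
  have hsum (x y : ℕ) (hx : x = 1) (hy : 1 ≤ y) : (1 : ℚ) ≤ (x : ℚ)⁻¹ + (y : ℚ)⁻¹ := by
    subst hx; simp [show (0 : ℚ) ≤ (y : ℚ)⁻¹ by positivity]
  obtain ha1 | ha2 : #{g' ∈ G | a ∈ g'} = 1 ∨ 2 ≤ #{g' ∈ G | a ∈ g'} := by omega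
  · simpa using hsum _ _ ha1 hb
  obtain hb1 | hb2 : #{g' ∈ G | b ∈ g'} = 1 ∨ 2 ≤ #{g' ∈ G | b ∈ g'} := by omega
  · simpa [add_comm] using hsum _ _ hb1 ha
  obtain ⟨d, had, hbd⟩ := exists_ne_pair_mem hG a hb2
  obtain ⟨d', hbd', had'⟩ := exists_ne_pair_mem hG b ha2
  have ha_le := card_filter_mem_le_two hG hP hg hbd had
  have hb_le := card_filter_mem_le_two hG hP (pair_comm a b ▸ hg) had' hbd'
  rw [show #{g' ∈ G | a ∈ g'} = 2 by omega, show #{g' ∈ G | b ∈ g'} = 2 by omega]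
  norm_num

lemma card_add_card_isolatedEdges_le (hG : ∀ g ∈ G, #g = 2) (hP : P4Free G) :
    #G + #(isolatedEdges G) ≤ #(G.biUnion id) := by
  have hiso : #(isolatedEdges G) = ∑ g ∈ G, if g ∈ isolatedEdges G then 1 else 0 := by
    have hsub : isolatedEdges G ⊆ G := filter_subset _ G
    rw [sum_boole, filter_mem_eq_inter, Nat.cast_id, inter_eq_right.2 hsub]
  have hvert : ∑ u ∈ G.biUnion id, ∑ g ∈ G with u ∈ g, (#{g' ∈ G | u ∈ g'} : ℚ)⁻¹
      = #(G.biUnion id) := by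
    rw [card_eq_sum_ones, Nat.cast_sum]
    refine sum_congr rfl fun u hu => ?_
    obtain ⟨g, hg, hug⟩ := mem_biUnion.1 hu
    have hdeg := Nat.one_le_iff_ne_zero.1 (one_le_card_filter_mem hg hug)
    rw [sum_const, nsmul_eq_mul, Nat.cast_one, mul_inv_cancel₀ (Nat.cast_ne_zero.2 hdeg)]
  have : (#G + #(isolatedEdges G) : ℚ) ≤ #(G.biUnion id) := by
    calc (#G + #(isolatedEdges G) : ℚ)
        = ∑ g ∈ G, (1 + if g ∈ isolatedEdges G then 1 else 0 : ℚ) := by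
          rw [sum_add_distrib, hiso]; simp
      _ ≤ ∑ g ∈ G, ∑ u ∈ g, (#{g' ∈ G | u ∈ g'} : ℚ)⁻¹ :=
          sum_le_sum fun g hg => one_add_ite_le_sum_inv_card hG hP hg
      _ = ∑ u ∈ G.biUnion id, ∑ g ∈ G with u ∈ g, (#{g' ∈ G | u ∈ g'} : ℚ)⁻¹ :=
          sum_comm' fun g u => by simp only [mem_biUnion, mem_filter, id]; tauto
      _ = #(G.biUnion id) := hvert
  exact_mod_cast this

end TwoGraph

section Complex

variable {V : Type*} [DecidableEq V] {E : Finset (Finset V)}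

lemma mem_linkEdges_iff {v : V} {g : Finset V} : g ∈ linkEdges E v ↔ v ∉ g ∧ insert v g ∈ E := by
  simp only [linkEdges, mem_image, mem_filter]
  constructor
  · rintro ⟨e, ⟨he, hve⟩, rfl⟩
    exact ⟨notMem_erase v e, by rwa [insert_erase hve]⟩
  · rintro ⟨hv, hg⟩
    exact ⟨insert v g, ⟨hg, mem_insert_self v g⟩, erase_insert hv⟩

lemma hasCopy_B_s14 (hE : IsComplex E) {a₁ a₂ a₃ a₄ a₅ : V} (hnd : [a₁, a₂, a₃, a₄, a₅].Nodup)
    (h₁ : {a₁, a₂, a₃} ∈ E) (h₂ : {a₁, a₄, a₅} ∈ E) (h₃ : {a₃, a₄} ∈ E) : HasCopy B E := by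
  simp only [List.nodup_cons, List.mem_cons, List.not_mem_nil, or_false, not_or,
    List.nodup_nil, and_true] at hnd
  refine ⟨![a₁, a₂, a₃, a₄, a₅], fun i j hij => ?_, fun e he => ?_⟩
  · fin_cases i <;> fin_cases j <;> simp_all [eq_comm]
  · simp only [B, dClosure, mem_biUnion, mem_insert, mem_singleton, mem_powerset] at he
    obtain ⟨s, hs, hes⟩ := he
    refine hE _ ?_ _ (image_subset_image hes)
    rcases hs with rfl | rfl | rfl <;> simpa [image_insert]

lemma p4Free_link (hE : IsComplex E) (hB : ¬ HasCopy B E) (w : V) :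
    P4Free {g ∈ linkEdges E w | #g = 2} := by
  intro a b c d hac had hbd hab hbc hcd
  simp only [mem_filter, mem_linkEdges_iff, mem_insert, mem_singleton, not_or] at hab hbc hcd
  obtain ⟨⟨⟨hwa, hwb⟩, hwab⟩, hab⟩ := hab
  obtain ⟨⟨⟨-, hwc⟩, hwbc⟩, hbc⟩ := hbc
  obtain ⟨⟨⟨-, hwd⟩, hwcd⟩, hcd⟩ := hcd
  refine hB (hasCopy_B_s14 hE (a₁ := w) ?_ hwab hwcd (hE _ hwbc _ (subset_insert w _)))
  simp [*, card_pair_eq_two_iff.1 hab, card_pair_eq_two_iff.1 hbc, card_pair_eq_two_iff.1 hcd]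

lemma degI_succ_eq_card_linkEdges (k : ℕ) (v : V) :
    degI E (k + 1) v = #{g ∈ linkEdges E v | #g = k} := by
  refine card_nbij' (·.erase v) (insert v) (fun e he => ?_) (fun g hg => ?_)
    (fun e he => insert_erase (mem_filter.1 he).2.1) (fun g hg => erase_insert ?_)
  · obtain ⟨he, hve, hcard⟩ := mem_filter.1 he
    refine mem_filter.2 ⟨mem_linkEdges_iff.2 ⟨notMem_erase v e, by rwa [insert_erase hve]⟩, ?_⟩
    rw [card_erase_of_mem hve, hcard, Nat.add_sub_cancel]
  · obtain ⟨hg, hcard⟩ := mem_filter.1 hg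
    obtain ⟨hvg, hgE⟩ := mem_linkEdges_iff.1 hg
    exact mem_filter.2 ⟨hgE, mem_insert_self v g, by rw [card_insert_of_notMem hvg, hcard]⟩
  · exact (mem_linkEdges_iff.1 (mem_filter.1 hg).1).1

lemma degI_three_eq_e2 (v : V) : degI E 3 v = e2 E v :=
  degI_succ_eq_card_linkEdges 2 v

lemma dDeg_eq_degI_two_add_degI_three (hsize : ∀ e ∈ E, #e ≤ 3) (u : V) :
    dDeg E u = degI E 2 u + degI E 3 u := by
  rw [dDeg, degI, degI, ← card_union_of_disjoint (disjoint_filter.2 fun e _ h₂ h₃ => by omega),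
    ← filter_or]
  refine congrArg card (filter_congr fun e he => ?_)
  have := hsize e he
  grind

lemma phi_eq_card_isolatedEdges (w : V) :
    phi E w = #(isolatedEdges {g ∈ linkEdges E w | #g = 2}) := by
  simp only [phi, isolatedEdges, filter_filter, mem_filter]
  congr 1
  ext g
  simp only [mem_filter]
  grind

lemma card_biUnion_id_of_card_eq_one {F : Finset (Finset V)} (hF : ∀ g ∈ F, #g = 1) :
    #(F.biUnion id) = #F := by
  have hdisj : (F : Set (Finset V)).PairwiseDisjoint id := fun g hg g' hg' hne => by
    obtain ⟨a, rfl⟩ := card_eq_one.1 (hF g hg)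
    obtain ⟨b, rfl⟩ := card_eq_one.1 (hF g' hg')
    simpa [Function.onFun] using hne
  rw [card_biUnion hdisj, card_eq_sum_ones]
  exact sum_congr rfl hF

lemma eq_or_eq_of_mem_linkEdges (hE : IsComplex E) (hB : ¬ HasCopy B E) {v w x y u b : V}
    (hwx : w ≠ x) (hxy : x ≠ y) (hyw : y ≠ w)
    (hvwx : {w, x} ∈ linkEdges E v) (hvxy : {x, y} ∈ linkEdges E v)
    (hvu : {u} ∈ linkEdges E v) (hwub : {u, b} ∈ linkEdges E w) (hub : u ≠ b) :
    u = x ∨ u = y := by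
  simp only [mem_linkEdges_iff, mem_insert, mem_singleton, not_or] at hvwx hvxy hvu hwub
  obtain ⟨⟨hvw, hvx⟩, hvwx⟩ := hvwx
  obtain ⟨⟨-, hvy⟩, hvxy⟩ := hvxy
  obtain ⟨hvu, huv⟩ := hvu
  obtain ⟨⟨hwu, hwb⟩, hwub⟩ := hwub
  have hwxE : {w, x} ∈ E := hE _ hvwx _ (subset_insert v _)
  have huvE : {u, v} ∈ E := pair_comm v u ▸ huv
  by_contra! hux
  apply hB
  by_cases hbv : b = v
  · subst hbv
    refine hasCopy_B_s14 hE (a₁ := b) (a₂ := u) (a₃ := w) ?_ ?_ hvxy hwxE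
    · grind [List.nodup_cons]
    · exact hE _ hwub _ (by simp [subset_iff])
  by_cases hbx : b = x
  · subst hbx
    refine hasCopy_B_s14 hE (a₁ := b) (a₂ := w) (a₃ := u) (a₄ := v) (a₅ := y) ?_ ?_ ?_ huvE
    · grind [List.nodup_cons]
    · exact hE _ hwub _ (by simp [subset_iff])
    · exact hE _ hvxy _ (by simp [subset_iff])
  · refine hasCopy_B_s14 hE (a₁ := w) (a₂ := b) (a₃ := u) (a₄ := v) (a₅ := x) ?_ ?_ ?_ huvE
    · grind [List.nodup_cons]
    · exact hE _ hwub _ (by simp [subset_iff])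
    · exact hE _ hvwx _ (by simp [subset_iff])

end Complex

lemma degI_two_add_e2_add_phi_le {V : Type*} [DecidableEq V] [Fintype V]
    {E : Finset (Finset V)} (hE : IsComplex E) (hB : ¬ HasCopy B E) {v w : V}
    (htip : TipOfStar E v w) : degI E 2 v + (e2 E w + phi E w) ≤ Fintype.card V + 2 := by
  obtain ⟨x, y, hwx, hxy, hyw, hvwx, hvxy⟩ := htip
  rw [e2, phi_eq_card_isolatedEdges]
  set G := {g ∈ linkEdges E w | #g = 2}
  set L := {g ∈ linkEdges E v | #g = 1}
  have hG : #G + #(isolatedEdges G) ≤ #(G.biUnion id) :=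
    card_add_card_isolatedEdges_le (fun g hg => (mem_filter.1 hg).2) (p4Free_link hE hB w)
  have hL : #(L.biUnion id) = degI E 2 v := by
    rw [card_biUnion_id_of_card_eq_one fun g hg => (mem_filter.1 hg).2]
    exact (degI_succ_eq_card_linkEdges 1 v).symm
  have hinter : G.biUnion id ∩ L.biUnion id ⊆ {x, y} := by
    intro u hu
    simp only [G, L, mem_inter, mem_biUnion, id, mem_filter] at hu
    obtain ⟨⟨g, ⟨hgw, hg2⟩, hug⟩, ⟨s, ⟨hsv, hs1⟩, hus⟩⟩ := hu
    obtain ⟨b, hub, rfl⟩ := exists_eq_pair_of_card_eq_two hg2 hug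
    obtain ⟨a, rfl⟩ := card_eq_one.1 hs1
    obtain rfl := mem_singleton.1 hus
    simpa using
      eq_or_eq_of_mem_linkEdges hE hB hwx hxy hyw hvwx hvxy hsv hgw hub
  have hunion := card_union_add_card_inter (G.biUnion id) (L.biUnion id)
  have huniv := card_le_univ (G.biUnion id ∪ L.biUnion id)
  have hinter_card := (card_le_card hinter).trans card_le_two
  omega

theorem statement14 (n : ℕ) (E : Finset (Finset (Fin n)))
    (hcplx : IsComplex E) (hfree : ¬ HasCopy B E)
    (v w : Fin n) (htip : TipOfStar E v w) :
    (degI E 2 v : ℤ) ≤ (n : ℤ) - rho E w ∧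
    ((∀ e ∈ E, e.card ≤ 3) →
      (∀ u : Fin n, (dDeg E u : ℝ) > 9 / 8 * ((n : ℝ) - 1) + 5 / 16) →
      (degI E 3 v : ℤ) - 2 ≤ rho E v ∧
      (degI E 3 v : ℝ) - 2 > ((n : ℝ) - 1) / 8 - 43 / 16 + (rho E w : ℝ)) := by
  have hcount := degI_two_add_e2_add_phi_le hcplx hfree htip
  rw [Fintype.card_fin] at hcount
  have hdeg₂ : (degI E 2 v : ℤ) ≤ n - rho E w := by
    rw [rho]
    omega
  refine ⟨hdeg₂, fun hsize hdeg => ⟨by rw [rho, degI_three_eq_e2]; omega, ?_⟩⟩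
  have hdegv := hdeg v
  rw [dDeg_eq_degI_two_add_degI_three hsize, Nat.cast_add] at hdegv
  have : (degI E 2 v : ℝ) ≤ n - rho E w := by exact_mod_cast hdeg₂
  linarith
end

section
/- There is n0 ∈ ℕ such that the following holds for every n ≥ n0. Let H be a B-free simplicial complex on n vertices in which every edge has size at most 3 and every vertex u satisfies d(u) > (9/8)(n−1) + 5/16. If v is a vertex with ρ(v) = max_{w ∈ V(H)} ρ(w), then the link L_v contains no isolated 2-edge. -/
open Finset

lemma pair_form {V : Type*} [DecidableEq V] {e : Finset V} {u : V} (h2 : e.card = 2) (hu : u ∈ e) :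
    ∃ w, w ≠ u ∧ e = {u, w} := by
  obtain ⟨a, b, hab, rfl⟩ := Finset.card_eq_two.mp h2
  rcases Finset.mem_insert.mp hu with rfl | hb
  · exact ⟨b, fun h => hab h.symm, rfl⟩
  · have hub : u = b := Finset.mem_singleton.mp hb
    subst hub
    exact ⟨a, fun h => hab h, Finset.pair_comm a u⟩


lemma hasCopyB {n : ℕ} {E : Finset (Finset (Fin n))} (hcomp : IsComplex E)
    {p1 p2 p3 p4 p5 : Fin n}
    (h12 : p1 ≠ p2) (h13 : p1 ≠ p3) (h14 : p1 ≠ p4) (h15 : p1 ≠ p5)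
    (h23 : p2 ≠ p3) (h24 : p2 ≠ p4) (h25 : p2 ≠ p5)
    (h34 : p3 ≠ p4) (h35 : p3 ≠ p5) (h45 : p4 ≠ p5)
    (he34 : ({p3, p4} : Finset (Fin n)) ∈ E)
    (he123 : ({p1, p2, p3} : Finset (Fin n)) ∈ E)
    (he145 : ({p1, p4, p5} : Finset (Fin n)) ∈ E) :
    HasCopy B E := by
  have hB : ∀ s ∈ B, s ⊆ {2,3} ∨ s ⊆ ({0,1,2} : Finset (Fin 5)) ∨ s ⊆ {0,3,4} := by decide
  refine ⟨fun i => [p1,p2,p3,p4,p5].get i, ?_, ?_⟩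
  · intro a b hab
    fin_cases a <;> fin_cases b <;> simp_all [List.get]
  · intro s hs
    rcases hB s hs with h | h | h
    · refine hcomp _ he34 _ ?_
      intro z hz
      obtain ⟨i, hi, rfl⟩ := Finset.mem_image.mp hz
      have hi' := h hi
      fin_cases hi' <;> simp [show ((2:Fin 5):ℕ) = 2 from rfl, show ((3:Fin 5):ℕ) = 3 from rfl, show ((4:Fin 5):ℕ) = 4 from rfl]
    · refine hcomp _ he123 _ ?_
      intro z hz
      obtain ⟨i, hi, rfl⟩ := Finset.mem_image.mp hz
      have hi' := h hi
      fin_cases hi' <;> simp [show ((2:Fin 5):ℕ) = 2 from rfl, show ((3:Fin 5):ℕ) = 3 from rfl, show ((4:Fin 5):ℕ) = 4 from rfl]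
    · refine hcomp _ he145 _ ?_
      intro z hz
      obtain ⟨i, hi, rfl⟩ := Finset.mem_image.mp hz
      have hi' := h hi
      fin_cases hi' <;> simp [show ((2:Fin 5):ℕ) = 2 from rfl, show ((3:Fin 5):ℕ) = 3 from rfl, show ((4:Fin 5):ℕ) = 4 from rfl]

section GraphLemma
variable {V : Type*} [DecidableEq V]

private def degM (M : Finset (Finset V)) (u : V) : ℕ := (M.filter (fun e => u ∈ e)).card

private def f2 (M : Finset (Finset V)) (e : Finset V) (u : V) : ℕ :=
  if ∀ e' ∈ M, e' ≠ e → Disjoint e' e then 2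
  else if degM M u = 1 then 2
  else if ∀ w ∈ e, w ≠ u → 2 ≤ degM M w then 1 else 0

private lemma f2_le_two (M : Finset (Finset V)) (e : Finset V) (u : V) : f2 M e u ≤ 2 := by
  unfold f2; split_ifs <;> omega

private lemma degM_pos {M : Finset (Finset V)} {e : Finset V} {u : V} (he : e ∈ M) (hu : u ∈ e) :
    1 ≤ degM M u := by
  refine Finset.card_pos.mpr ⟨e, Finset.mem_filter.mpr ⟨he, hu⟩⟩

private lemma sent_ge (M : Finset (Finset V)) (e : Finset V) (he : e ∈ M) (h2 : e.card = 2) :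
    2 + (if ∀ e' ∈ M, e' ≠ e → Disjoint e' e then 2 else 0) ≤ ∑ u ∈ e, f2 M e u := by
  obtain ⟨a, b, hab, rfl⟩ := Finset.card_eq_two.mp h2
  rw [Finset.sum_insert (by simp [hab]), Finset.sum_singleton]
  by_cases hiso : ∀ e' ∈ M, e' ≠ ({a,b} : Finset V) → Disjoint e' {a,b}
  · rw [if_pos hiso]
    have h1 : f2 M {a,b} a = 2 := by unfold f2; rw [if_pos hiso]
    have h2 : f2 M {a,b} b = 2 := by unfold f2; rw [if_pos hiso]
    omega
  · rw [if_neg hiso]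
    have ha1 : 1 ≤ degM M a := degM_pos he (by simp)
    have hb1 : 1 ≤ degM M b := degM_pos he (by simp)
    by_cases hda : degM M a = 1
    · have h1 : f2 M {a,b} a = 2 := by unfold f2; rw [if_neg hiso, if_pos hda]
      omega
    · by_cases hdb : degM M b = 1
      · have h1 : f2 M {a,b} b = 2 := by unfold f2; rw [if_neg hiso, if_pos hdb]
        omega
      · have h1 : f2 M {a,b} a = 1 := by
          simp only [f2, if_neg hiso, if_neg hda]
          rw [if_pos]
          intro w hw hwa
          have : w = b := by
            rcases Finset.mem_insert.mp hw with rfl | hb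
            · exact absurd rfl hwa
            · exact Finset.mem_singleton.mp hb
          subst this; omega
        have h2 : f2 M {a,b} b = 1 := by
          simp only [f2, if_neg hiso, if_neg hdb]
          rw [if_pos]
          intro w hw hwb
          have : w = a := by
            rcases Finset.mem_insert.mp hw with rfl | hb
            · rfl
            · exact absurd (Finset.mem_singleton.mp hb) hwb
          subst this; omega
        omega

private lemma recv_le (M : Finset (Finset V)) (h2 : ∀ e ∈ M, e.card = 2)
    (hP4 : ∀ a b c d : V, a ≠ c → a ≠ d → b ≠ d →
      ({a,b} : Finset V) ∈ M → ({b,c} : Finset V) ∈ M → ({c,d} : Finset V) ∈ M → False)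
    (u : V) :
    ∑ e ∈ M.filter (fun e => u ∈ e), f2 M e u ≤ 2 := by
  set T := M.filter (fun e => u ∈ e) with hT
  rcases le_or_gt T.card 1 with h | h
  · calc ∑ e ∈ T, f2 M e u ≤ ∑ _e ∈ T, 2 := Finset.sum_le_sum (fun e _ => f2_le_two M e u)
    _ = T.card * 2 := by rw [Finset.sum_const, smul_eq_mul]
    _ ≤ 2 := by omega
  · have hdu : degM M u = T.card := rfl
    have step : ∀ e ∈ T, f2 M e u ≤ (if ∀ w ∈ e, w ≠ u → 2 ≤ degM M w then 1 else 0) := by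
      intro e heT
      have heM : e ∈ M := (Finset.mem_filter.mp heT).1
      have hue : u ∈ e := (Finset.mem_filter.mp heT).2
      have hniso : ¬ ∀ e' ∈ M, e' ≠ e → Disjoint e' e := by
        intro hiso
        obtain ⟨e', he'T, he'ne⟩ := Finset.exists_mem_ne h e
        have hue' : u ∈ e' := (Finset.mem_filter.mp he'T).2
        exact Finset.disjoint_left.mp (hiso e' (Finset.mem_filter.mp he'T).1 he'ne) hue' hue
      have hd1 : degM M u ≠ 1 := by omega
      simp only [f2, if_neg hniso, if_neg hd1]
      exact le_rfl
    have hsum := Finset.sum_le_sum step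
    have hcard : ∑ e ∈ T, (if ∀ w ∈ e, w ≠ u → 2 ≤ degM M w then 1 else 0)
        = (T.filter (fun e => ∀ w ∈ e, w ≠ u → 2 ≤ degM M w)).card := by
      rw [← Finset.sum_filter, Finset.sum_const, smul_eq_mul, mul_one]
    set F := T.filter (fun e => ∀ w ∈ e, w ≠ u → 2 ≤ degM M w) with hF
    have hFle : F.card ≤ 2 := by
      by_contra h3
      push_neg at h3
      obtain ⟨e1, he1⟩ := Finset.card_pos.mp (show 0 < F.card by omega)
      have h2' : 1 < (F.erase e1).card := by
        have := Finset.card_erase_of_mem he1; omega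
      obtain ⟨e2, he2, e3, he3, hne23⟩ := Finset.one_lt_card.mp h2'
      have he2F := Finset.mem_of_mem_erase he2
      have he3F := Finset.mem_of_mem_erase he3
      have hne21 : e2 ≠ e1 := Finset.ne_of_mem_erase he2
      have hne31 : e3 ≠ e1 := Finset.ne_of_mem_erase he3
      -- unpack
      have unpack : ∀ e ∈ F, ∃ w, w ≠ u ∧ e = {u, w} ∧ e ∈ M ∧ 2 ≤ degM M w := by
        intro e heF
        have heT : e ∈ T := (Finset.mem_filter.mp heF).1
        have heM : e ∈ M := (Finset.mem_filter.mp heT).1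
        have hue : u ∈ e := (Finset.mem_filter.mp heT).2
        obtain ⟨w, hwu, hew⟩ := pair_form (h2 e heM) hue
        refine ⟨w, hwu, hew, heM, (Finset.mem_filter.mp heF).2 w (by rw [hew]; simp) hwu⟩
      obtain ⟨w1, hw1u, he1w, he1M, hdw1⟩ := unpack e1 he1
      obtain ⟨w2, hw2u, he2w, he2M, _⟩ := unpack e2 he2F
      obtain ⟨w3, hw3u, he3w, he3M, _⟩ := unpack e3 he3F
      have hw12 : w1 ≠ w2 := fun h => hne21 (show e2 = e1 by rw [he1w, he2w, h])
      have hw13 : w1 ≠ w3 := fun h => hne31 (show e3 = e1 by rw [he1w, he3w, h])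
      have hw23 : w2 ≠ w3 := fun h => hne23 (show e2 = e3 by rw [he2w, he3w, h])
      -- w1 has another edge
      have hT1 : 1 < (M.filter (fun e => w1 ∈ e)).card := hdw1
      obtain ⟨e', he', hne'⟩ := Finset.exists_mem_ne hT1 e1
      have he'M : e' ∈ M := (Finset.mem_filter.mp he').1
      have hw1e' : w1 ∈ e' := (Finset.mem_filter.mp he').2
      obtain ⟨z, hzw1, he'z⟩ := pair_form (h2 e' he'M) hw1e'
      have hzu : z ≠ u := by
        intro h; subst h
        exact hne' (by rw [he'z, he1w, Finset.pair_comm])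
      -- choose w' ∈ {w2, w3} with w' ≠ z
      obtain ⟨w', hw'z, hw'u, hw'1, hw'M⟩ :
          ∃ w', w' ≠ z ∧ w' ≠ u ∧ w' ≠ w1 ∧ ({u, w'} : Finset V) ∈ M := by
        by_cases hwz : w2 = z
        · exact ⟨w3, fun h => hw23 (hwz.trans h.symm), hw3u, fun h => hw13 h.symm,
            by rw [← he3w]; exact he3M⟩
        · exact ⟨w2, hwz, hw2u, fun h => hw12 h.symm, by rw [← he2w]; exact he2M⟩
      refine hP4 w' u w1 z hw'1 hw'z hzu.symm ?_ ?_ ?_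
      · rw [Finset.pair_comm]; exact hw'M
      · rw [← he1w]; exact he1M
      · rw [← he'z]; exact he'M
    omega

lemma graph_lem (M I : Finset (Finset V)) (h2 : ∀ e ∈ M, e.card = 2)
    (hI : I ⊆ M) (hIiso : ∀ e ∈ I, ∀ e' ∈ M, e' ≠ e → Disjoint e' e)
    (hP4 : ∀ a b c d : V, a ≠ c → a ≠ d → b ≠ d →
      ({a,b} : Finset V) ∈ M → ({b,c} : Finset V) ∈ M → ({c,d} : Finset V) ∈ M → False) :
    M.card + I.card ≤ (M.biUnion id).card := by
  have key : 2 * M.card + 2 * I.card ≤ 2 * (M.biUnion id).card := by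
    have lhs : ∑ e ∈ M, (2 + if e ∈ I then 2 else 0) = 2 * M.card + 2 * I.card := by
      rw [Finset.sum_add_distrib, Finset.sum_const, Finset.sum_ite_mem,
        (Finset.inter_eq_right.mpr hI : M ∩ I = I), Finset.sum_const]
      simp [mul_comm]
    have step1 : ∑ e ∈ M, (2 + if e ∈ I then 2 else 0)
        ≤ ∑ e ∈ M, ∑ u ∈ e, f2 M e u := by
      refine Finset.sum_le_sum (fun e he => le_trans ?_ (sent_ge M e he (h2 e he)))
      by_cases hei : e ∈ I
      · rw [if_pos hei, if_pos (hIiso e hei)]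
      · rw [if_neg hei]
        split_ifs <;> omega
    have swap : ∑ e ∈ M, ∑ u ∈ e, f2 M e u
        = ∑ u ∈ M.biUnion id, ∑ e ∈ M.filter (fun e => u ∈ e), f2 M e u := by
      have h1 : ∀ e ∈ M, ∑ u ∈ e, f2 M e u
          = ∑ u ∈ M.biUnion id, if u ∈ e then f2 M e u else 0 := by
        intro e he
        rw [Finset.sum_ite_mem,
          (Finset.inter_eq_right.mpr (by simpa using Finset.subset_biUnion_of_mem id he) :
            M.biUnion id ∩ e = e)]
      rw [Finset.sum_congr rfl h1, Finset.sum_comm]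
      refine Finset.sum_congr rfl (fun u _ => ?_)
      rw [← Finset.sum_filter]
    have last : ∑ u ∈ M.biUnion id, ∑ e ∈ M.filter (fun e => u ∈ e), f2 M e u
        ≤ 2 * (M.biUnion id).card := by
      calc _ ≤ ∑ _u ∈ M.biUnion id, 2 := Finset.sum_le_sum (fun u _ => recv_le M h2 hP4 u)
        _ = 2 * (M.biUnion id).card := by rw [Finset.sum_const, smul_eq_mul, mul_comm]
    omega
  omega

end GraphLemma

lemma mem_linkEdges {V : Type*} [DecidableEq V] {E : Finset (Finset V)} {v : V} {f : Finset V} :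
    f ∈ linkEdges E v ↔ v ∉ f ∧ insert v f ∈ E := by
  constructor
  · intro h
    rw [linkEdges, Finset.mem_image] at h
    obtain ⟨e, he, rfl⟩ := h
    have h' := Finset.mem_filter.mp he
    exact ⟨Finset.notMem_erase _ _, by rw [Finset.insert_erase h'.2]; exact h'.1⟩
  · rintro ⟨hv, he⟩
    rw [linkEdges, Finset.mem_image]
    exact ⟨insert v f, Finset.mem_filter.mpr ⟨he, Finset.mem_insert_self _ _⟩,
      by rw [Finset.erase_insert hv]⟩

lemma e2_eq {V : Type*} [DecidableEq V] (E : Finset (Finset V)) (w : V) :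
    e2 E w = (E.filter (fun e => w ∈ e ∧ e.card = 3)).card := by
  rw [e2]
  have himg : (linkEdges E w).filter (fun f => f.card = 2) =
      (E.filter (fun e => w ∈ e ∧ e.card = 3)).image (fun e => e.erase w) := by
    ext f
    simp only [Finset.mem_filter, Finset.mem_image]
    constructor
    · rintro ⟨hf, hcard⟩
      rw [mem_linkEdges] at hf
      refine ⟨insert w f, ⟨hf.2, Finset.mem_insert_self _ _, ?_⟩, by rw [Finset.erase_insert hf.1]⟩
      rw [Finset.card_insert_of_notMem hf.1, hcard]
    · rintro ⟨e, ⟨heE, hwe, hc3⟩, rfl⟩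
      exact ⟨mem_linkEdges.mpr ⟨Finset.notMem_erase _ _,
        by rw [Finset.insert_erase hwe]; exact heE⟩,
        by rw [Finset.card_erase_of_mem hwe, hc3]⟩
  rw [himg, Finset.card_image_of_injOn]
  intro e1 h1 e2' h2 hee
  have hw1 : w ∈ e1 := (Finset.mem_filter.mp h1).2.1
  have hw2 : w ∈ e2' := (Finset.mem_filter.mp h2).2.1
  rw [← Finset.insert_erase hw1, ← Finset.insert_erase hw2]
  exact congrArg (insert w) hee

lemma dDeg_split {V : Type*} [DecidableEq V] (E : Finset (Finset V))
    (hsize : ∀ e ∈ E, e.card ≤ 3) (u : V) :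
    dDeg E u = (E.filter (fun e => u ∈ e ∧ e.card = 2)).card
      + (E.filter (fun e => u ∈ e ∧ e.card = 3)).card := by
  rw [dDeg]
  have hunion : E.filter (fun e => u ∈ e ∧ 2 ≤ e.card)
      = E.filter (fun e => u ∈ e ∧ e.card = 2) ∪ E.filter (fun e => u ∈ e ∧ e.card = 3) := by
    ext e
    simp only [Finset.mem_filter, Finset.mem_union]
    constructor
    · rintro ⟨he, hu, hc⟩
      have h3 := hsize e he
      have : e.card = 2 ∨ e.card = 3 := by omega
      rcases this with h | h
      · exact Or.inl ⟨he, hu, h⟩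
      · exact Or.inr ⟨he, hu, h⟩
    · rintro (⟨he, hu, h⟩ | ⟨he, hu, h⟩) <;> exact ⟨he, hu, by omega⟩
  rw [hunion, Finset.card_union_of_disjoint]
  rw [Finset.disjoint_left]
  intro e h1 h2
  have q1 := (Finset.mem_filter.mp h1).2.2
  have q2 := (Finset.mem_filter.mp h2).2.2
  omega

set_option maxHeartbeats 1000000 in
lemma deg_decomp {V : Type*} [DecidableEq V] (E : Finset (Finset V))
    (hsize : ∀ e ∈ E, e.card ≤ 3) (u : V) :
    ∃ F2 : Finset (Finset V), dDeg E u = F2.card + e2 E u ∧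
      ∀ f, f ∈ F2 ↔ f ∈ E ∧ u ∈ f ∧ f.card = 2 := by
  refine ⟨E.filter (fun e => u ∈ e ∧ e.card = 2), ?_,
    fun f => by simp [Finset.mem_filter, and_assoc]⟩
  rw [dDeg_split E hsize u, e2_eq E u]

theorem statement16 : ∃ n0 : ℕ, ∀ n : ℕ, n0 ≤ n → ∀ E : Finset (Finset (Fin n)),
    IsComplex E → ¬ HasCopy B E →
    (∀ e ∈ E, e.card ≤ 3) →
    (∀ u : Fin n, (dDeg E u : ℝ) > 9 / 8 * ((n : ℝ) - 1) + 5 / 16) →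
    ∀ v : Fin n, (∀ w : Fin n, rho E w ≤ rho E v) →
      ¬ ∃ e : Finset (Fin n), IsIsolated2Edge E v e := by
  refine ⟨100, ?_⟩
  intro n hn E hcomp hBfree hsize hdeg v hmax hex
  obtain ⟨e, he⟩ := hex
  simp only [IsIsolated2Edge] at he
  obtain ⟨heL, hec, hiso⟩ := he
  obtain ⟨x, y, hxy, rfl⟩ := Finset.card_eq_two.mp hec
  obtain ⟨hvnot, hvxyE⟩ := mem_linkEdges.mp heL
  set L2 := (linkEdges E v).filter (fun f => f.card = 2) with hL2
  set M := L2.erase {x,y} with hMdef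
  have hMmem : ∀ f ∈ M, f ∈ linkEdges E v ∧ f.card = 2 ∧ f ≠ {x,y} := by
    intro f hf
    have h1 := Finset.mem_of_mem_erase hf
    rw [hL2, Finset.mem_filter] at h1
    exact ⟨h1.1, h1.2, Finset.ne_of_mem_erase hf⟩
  have hMtri : ∀ f ∈ M, insert v f ∈ E ∧ v ∉ f := by
    intro f hf
    have h1 := mem_linkEdges.mp (hMmem f hf).1
    exact ⟨h1.2, h1.1⟩
  have hMdisj : ∀ f ∈ M, Disjoint f {x,y} := by
    intro f hf
    exact hiso f (hMmem f hf).1 (hMmem f hf).2.1 (hMmem f hf).2.2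
  set S := M.biUnion id with hSdef
  have hSmem : ∀ w ∈ S, ∃ f ∈ M, w ∈ f := by
    intro w hw
    obtain ⟨f, hf, hwf⟩ := Finset.mem_biUnion.mp hw
    exact ⟨f, hf, hwf⟩
  have hSnotxy : ∀ w ∈ S, w ≠ x ∧ w ≠ y ∧ w ≠ v := by
    intro w hw
    obtain ⟨f, hfM, hwf⟩ := hSmem w hw
    have hwn : w ∉ ({x,y} : Finset (Fin n)) := Finset.disjoint_left.mp (hMdisj f hfM) hwf
    exact ⟨fun h => hwn (by rw [h]; simp), fun h => hwn (by rw [h]; simp),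
      fun h => (hMtri f hfM).2 (h ▸ hwf)⟩
  have hvx : v ≠ x := fun h => hvnot (by rw [h]; simp)
  have hvy : v ≠ y := fun h => hvnot (by rw [h]; simp)
  -- B-freeness: no 2-edge from x into S
  have hxS : ∀ w ∈ S, ({x, w} : Finset (Fin n)) ∉ E := by
    intro w hwS hxwE
    obtain ⟨f, hfM, hwf⟩ := hSmem w hwS
    obtain ⟨b, hbw, hfeq⟩ := pair_form (hMmem f hfM).2.1 hwf
    obtain ⟨hwx, hwy, hwv⟩ := hSnotxy w hwS
    have hbS : b ∈ S := Finset.mem_biUnion.mpr ⟨f, hfM, by rw [hfeq]; simp⟩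
    obtain ⟨hbx, hby, hbv⟩ := hSnotxy b hbS
    have ht1 : ({v, y, x} : Finset (Fin n)) ∈ E := by
      rw [show ({v,y,x} : Finset (Fin n)) = insert v {x,y} by rw [Finset.pair_comm y x]]
      exact hvxyE
    have ht2 : ({v, w, b} : Finset (Fin n)) ∈ E := by
      rw [show ({v,w,b} : Finset (Fin n)) = insert v f by rw [hfeq]]
      exact (hMtri f hfM).1
    exact hBfree (hasCopyB hcomp hvy hvx hwv.symm hbv.symm (fun h => hxy h.symm) hwy.symm
      hby.symm hwx.symm hbx.symm (fun h => hbw h.symm) hxwE ht1 ht2)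
  -- P4-freeness of M
  have hP4 : ∀ a b c d : Fin n, a ≠ c → a ≠ d → b ≠ d →
      ({a,b} : Finset (Fin n)) ∈ M → ({b,c} : Finset (Fin n)) ∈ M →
      ({c,d} : Finset (Fin n)) ∈ M → False := by
    intro a b c d hac had hbd h1 h2 h3
    have hab : a ≠ b := by
      intro h; subst h
      have := (hMmem _ h1).2.1; simp at this
    have hbc : b ≠ c := by
      intro h; subst h
      have := (hMmem _ h2).2.1; simp at this
    have hcd : c ≠ d := by
      intro h; subst h
      have := (hMmem _ h3).2.1; simp at this
    have hva : v ≠ a := fun h => (hMtri _ h1).2 (by rw [h]; simp)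
    have hvb : v ≠ b := fun h => (hMtri _ h1).2 (by rw [h]; simp)
    have hvc : v ≠ c := fun h => (hMtri _ h3).2 (by rw [h]; simp)
    have hvd : v ≠ d := fun h => (hMtri _ h3).2 (by rw [h]; simp)
    have hbcE : ({b, c} : Finset (Fin n)) ∈ E :=
      hcomp _ (hMtri _ h2).1 _ (Finset.subset_insert _ _)
    exact hBfree (hasCopyB hcomp hva hvb hvc hvd hab hac had hbc hbd hcd hbcE
      (hMtri _ h1).1 (hMtri _ h3).1)
  obtain ⟨I, hIM, hIiso, hIcard⟩ :
      ∃ I : Finset (Finset (Fin n)), I ⊆ M ∧ (∀ e ∈ I, ∀ e' ∈ M, e' ≠ e → Disjoint e' e) ∧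
        ∀ f ∈ linkEdges E v, f.card = 2 →
          (∀ e' ∈ linkEdges E v, e'.card = 2 → e' ≠ f → Disjoint e' f) →
          f ∈ insert ({x,y} : Finset (Fin n)) I := by
    refine ⟨M.filter (fun e => ∀ e' ∈ M, e' ≠ e → Disjoint e' e), Finset.filter_subset _ _,
      fun e he => (Finset.mem_filter.mp he).2, ?_⟩
    intro f hfL hf2 hfiso
    by_cases hfe : f = ({x,y} : Finset (Fin n))
    · simp [hfe]
    · refine Finset.mem_insert.mpr (Or.inr (Finset.mem_filter.mpr ⟨?_, ?_⟩))
      · rw [hMdef]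
        exact Finset.mem_erase.mpr ⟨hfe, by
          rw [hL2, Finset.mem_filter]; exact ⟨hfL, hf2⟩⟩
      · intro f' hf'' hne
        exact hfiso f' (hMmem f' hf'').1 (hMmem f' hf'').2.1 hne
  have hkey := graph_lem M I (fun f hf => (hMmem f hf).2.1) hIM hIiso hP4
  rw [← hSdef] at hkey
  have hxyL2 : ({x,y} : Finset (Fin n)) ∈ L2 := by
    rw [hL2, Finset.mem_filter]; exact ⟨heL, hec⟩
  have he2v : e2 E v = M.card + 1 := by
    have h1 : M.card + 1 = L2.card := by rw [hMdef]; exact Finset.card_erase_add_one hxyL2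
    have h2 : e2 E v = L2.card := by rw [hL2]; rfl
    omega
  have hphi : phi E v ≤ I.card + 1 := by
    rw [phi]
    refine le_trans (Finset.card_le_card ?_)
      (Finset.card_insert_le ({x,y} : Finset (Fin n)) I)
    intro f hf
    simp only [Finset.mem_filter] at hf
    exact hIcard f hf.1 hf.2.1 hf.2.2
  have hrho := hmax x
  simp only [rho] at hrho
  have hex2 : e2 E x ≤ e2 E v + phi E v := by omega
  obtain ⟨F2, hdecomp, hF2mem⟩ := deg_decomp E hsize x
  have hA2 : F2.card + S.card + 1 ≤ n := by
    have hinj : F2.card = (F2.image (fun e => e.erase x)).card := by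
      rw [Finset.card_image_of_injOn]
      intro e1 h1 e2' h2 hee
      have hx1 : x ∈ e1 := ((hF2mem e1).mp h1).2.1
      have hx2 : x ∈ e2' := ((hF2mem e2').mp h2).2.1
      rw [← Finset.insert_erase hx1, ← Finset.insert_erase hx2]
      exact congrArg (insert x) hee
    have hsub : F2.image (fun e => e.erase x)
        ⊆ (Finset.univ \ insert x S).image (fun w => ({w} : Finset (Fin n))) := by
      intro f hf
      obtain ⟨e, heA, rfl⟩ := Finset.mem_image.mp hf
      obtain ⟨heE, hxe, he2'⟩ := (hF2mem e).mp heA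
      obtain ⟨w, hwx, rfl⟩ := pair_form he2' hxe
      have herase : ({x,w} : Finset (Fin n)).erase x = {w} := by
        rw [Finset.erase_insert (by simp; exact fun h => hwx h.symm)]
      rw [herase]
      refine Finset.mem_image.mpr ⟨w, Finset.mem_sdiff.mpr ⟨Finset.mem_univ w, ?_⟩, rfl⟩
      intro hw
      rcases Finset.mem_insert.mp hw with h | hwS
      · exact hwx h
      · exact hxS w hwS heE
    have himgcard : ((Finset.univ \ insert x S).image
        (fun w => ({w} : Finset (Fin n)))).card = (Finset.univ \ insert x S).card :=
      Finset.card_image_of_injective _ Finset.singleton_injective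
    have hxnS : x ∉ S := fun h => (hSnotxy x h).1 rfl
    have hins : (insert x S).card = S.card + 1 := Finset.card_insert_of_notMem hxnS
    have hsd : (Finset.univ \ insert x S).card = n - (S.card + 1) := by
      rw [Finset.card_sdiff_of_subset (Finset.subset_univ _), Finset.card_univ, Fintype.card_fin, hins]
    have hcardle : (insert x S).card ≤ n := by
      have h' := Finset.card_le_card (Finset.subset_univ (insert x S))
      rwa [Finset.card_univ, Fintype.card_fin] at h'
    have hc := Finset.card_le_card hsub
    omega
  have hfinal : dDeg E x ≤ n + 1 := by omega
  have hdegr := hdeg x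
  have hcast : (dDeg E x : ℝ) ≤ (n : ℝ) + 1 := by exact_mod_cast hfinal
  have hnr : (100 : ℝ) ≤ (n : ℝ) := by exact_mod_cast hn
  linarith
end
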